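/- arXiv:math/0311274 — 5 statements merged into one kernel-verified Lean document; each statement's English description precedes it below -/
import Mathlib

section
/- Let (X, B, μ) be a probability measure space, T₁ and T₂ two measure preserving transformations of (X, B, μ), and let I₁ and I₂ denote the sub-σ-algebras of B consisting of T₁-invariant and T₂-invariant sets respectively. Then for every measurable set A, lim_{N→∞} (1/N²) ∑_{n,m=1}^N μ(A ∩ T₁⁻ⁿA ∩ T₂^{-(n+m)}A) = ∫_A E(1_A | I₁)(x) · E(1_A | I₂)(x) dμ(x); in particular the limit exists. -/
set_option synthInstance.maxHeartbeats 1000000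
set_option maxHeartbeats 1000000

open MeasureTheory Filter Finset

/-- The sub-σ-algebra of `T`-invariant measurable sets, `{A ∈ B : T⁻¹A = A}`. -/
def invariantAlgebra {X : Type*} [MeasurableSpace X] (T : X → X) : MeasurableSpace X where
  MeasurableSet' A := MeasurableSet A ∧ T ⁻¹' A = A
  measurableSet_empty := ⟨MeasurableSet.empty, Set.preimage_empty⟩
  measurableSet_compl A hA := ⟨hA.1.compl, by rw [Set.preimage_compl, hA.2]⟩
  measurableSet_iUnion s hs := ⟨MeasurableSet.iUnion fun i => (hs i).1, by
    simp only [Set.preimage_iUnion]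
    exact Set.iUnion_congr fun i => (hs i).2⟩

open Function
open scoped RealInnerProductSpace ENNReal Topology

section Aux

variable {X : Type*} [mX : MeasurableSpace X] {μ : Measure X}

lemma invariantAlgebra_le (T : X → X) : invariantAlgebra T ≤ mX := fun _ hs => hs.1

lemma invariantAlgebra_measurableSet_iff (T : X → X) (s : Set X) :
    MeasurableSet[invariantAlgebra T] s ↔ MeasurableSet s ∧ T ⁻¹' s = s := Iff.rfl

lemma aestronglyMeasurable'_of_ae_invariant {T : X → X} (hT : MeasurePreserving T μ μ)
    {g : X → ℝ} (hgm : Measurable g) (hg : g ∘ T =ᵐ[μ] g) :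
    AEStronglyMeasurable[invariantAlgebra T] g μ := by
  have hTm := hT.measurable
  set h : X → ℝ := fun x => limsup (fun n => g (T^[n] x)) atTop with hh
  have hmeas : Measurable h := Measurable.limsup fun n => hgm.comp (hTm.iterate n)
  have hinv : ∀ x, h (T x) = h x := by
    intro x
    have h1 : (fun n => g (T^[n] (T x))) = fun n => g (T^[n + 1] x) := by
      funext n; rw [Function.iterate_succ_apply]
    simp only [hh]
    rw [h1]
    exact limsup_nat_add (fun n => g (T^[n] x)) 1
  have hminv : Measurable[invariantAlgebra T] h := fun s hs =>
    ⟨hmeas hs, by ext x; simp [Set.mem_preimage, hinv x]⟩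
  refine ⟨h, hminv.stronglyMeasurable, ?_⟩
  have hD : ∀ n : ℕ, ∀ᵐ x ∂μ, g (T (T^[n] x)) = g (T^[n] x) := by
    intro n
    have hmap : μ.map (T^[n]) = μ := (hT.iterate n).map_eq
    have h2 : (g ∘ T) ∘ T^[n] =ᵐ[μ] g ∘ T^[n] :=
      MeasureTheory.ae_eq_comp (hTm.iterate n).aemeasurable (by rwa [hmap])
    exact h2
  have hall : ∀ᵐ x ∂μ, ∀ n, g (T (T^[n] x)) = g (T^[n] x) := ae_all_iff.mpr hD
  filter_upwards [hall] with x hx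
  have hconst : ∀ n, g (T^[n] x) = g x := by
    intro n; induction n with
    | zero => simp
    | succ n ih => rw [Function.iterate_succ_apply', hx n, ih]
  have h3 : (fun n => g (T^[n] x)) = fun _ => g x := funext hconst
  simp only [hh]
  rw [h3, limsup_const]

variable (μ) in
/-- The Koopman operator of a measure preserving map, on real `L²`. -/
noncomputable def koopman (T : X → X) (hT : MeasurePreserving T μ μ) :
    Lp ℝ 2 μ →L[ℝ] Lp ℝ 2 μ :=
  (Lp.compMeasurePreservingₗᵢ ℝ T hT).toContinuousLinearMap

lemma koopman_apply {T : X → X} (hT : MeasurePreserving T μ μ) (g : Lp ℝ 2 μ) :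
    koopman μ T hT g = Lp.compMeasurePreserving T hT g := rfl

lemma koopman_coeFn {T : X → X} (hT : MeasurePreserving T μ μ) (g : Lp ℝ 2 μ) :
    ⇑(koopman μ T hT g) =ᵐ[μ] ⇑g ∘ T := Lp.coeFn_compMeasurePreserving g hT

lemma koopman_norm_le {T : X → X} (hT : MeasurePreserving T μ μ) :
    ‖koopman μ T hT‖ ≤ 1 := LinearIsometry.norm_toContinuousLinearMap_le _

lemma koopman_norm_apply {T : X → X} (hT : MeasurePreserving T μ μ) (g : Lp ℝ 2 μ) :
    ‖koopman μ T hT g‖ = ‖g‖ := Lp.norm_compMeasurePreserving g hT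

lemma koopman_iterate_norm {T : X → X} (hT : MeasurePreserving T μ μ) (n : ℕ) (g : Lp ℝ 2 μ) :
    ‖(koopman μ T hT)^[n] g‖ = ‖g‖ := by
  induction n with
  | zero => rfl
  | succ n ih => rw [Function.iterate_succ_apply', koopman_norm_apply, ih]

lemma koopman_iterate_coeFn {T : X → X} (hT : MeasurePreserving T μ μ) (n : ℕ) (g : Lp ℝ 2 μ) :
    ⇑((koopman μ T hT)^[n] g) =ᵐ[μ] ⇑g ∘ T^[n] := by
  induction n with
  | zero => simp
  | succ n ih =>
    rw [Function.iterate_succ_apply']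
    refine (koopman_coeFn hT _).trans ?_
    have h2 : ⇑((koopman μ T hT)^[n] g) ∘ T =ᵐ[μ] (⇑g ∘ T^[n]) ∘ T :=
      MeasureTheory.ae_eq_comp hT.measurable.aemeasurable (by rwa [hT.map_eq])
    refine h2.trans ?_
    rw [Function.comp_assoc, ← Function.iterate_succ]

lemma indicatorConstLp_congr_set {s t : Set X} (h : s = t) (hs : MeasurableSet s)
    (ht : MeasurableSet t) (hμs : μ s ≠ ⊤) (hμt : μ t ≠ ⊤) (c : ℝ) :
    indicatorConstLp 2 hs hμs c = indicatorConstLp 2 ht hμt c := by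
  subst h; rfl

end Aux

section Aux2

variable {X : Type*} [mX : MeasurableSpace X] {μ : Measure X} [IsProbabilityMeasure μ]

lemma koopman_iterate_indicator {T : X → X} (hT : MeasurePreserving T μ μ)
    {A : Set X} (hA : MeasurableSet A) (k : ℕ) :
    (koopman μ T hT)^[k] (indicatorConstLp 2 hA (measure_ne_top μ A) (1 : ℝ)) =
      indicatorConstLp 2 (hA.preimage (hT.measurable.iterate k)) (measure_ne_top μ _) (1 : ℝ) := by
  induction k with
  | zero =>
    rw [Function.iterate_zero, id_eq]
    rfl
  | succ k ih =>
    rw [Function.iterate_succ_apply', ih, koopman_apply,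
      Lp.indicatorConstLp_compMeasurePreserving]
    rfl

lemma inner_indicatorConstLp_indicatorConstLp {s t : Set X} (hs : MeasurableSet s)
    (ht : MeasurableSet t) :
    ⟪indicatorConstLp 2 hs (measure_ne_top μ s) (1 : ℝ),
      indicatorConstLp 2 ht (measure_ne_top μ t) (1 : ℝ)⟫ = (μ (s ∩ t)).toReal := by
  rw [L2.inner_indicatorConstLp_one hs (measure_ne_top μ s)]
  have h1 : ∫ x in s, (indicatorConstLp 2 ht (measure_ne_top μ t) (1 : ℝ)) x ∂μ =
      ∫ x in s, t.indicator (fun _ => (1 : ℝ)) x ∂μ :=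
    integral_congr_ae (ae_restrict_of_ae indicatorConstLp_coeFn)
  rw [h1, setIntegral_indicator ht, setIntegral_const, smul_eq_mul, mul_one]
  rfl

lemma norm_indicatorConstLp_le_one {s : Set X} (hs : MeasurableSet s) :
    ‖indicatorConstLp 2 hs (measure_ne_top μ s) (1 : ℝ)‖ ≤ 1 := by
  rw [norm_indicatorConstLp (by norm_num) (by norm_num)]
  have h1 : (μ s).toReal ≤ 1 := by
    have := prob_le_one (μ := μ) (s := s)
    exact ENNReal.toReal_le_of_le_ofReal zero_le_one (by simpa using this)
  calc ‖(1:ℝ)‖ * (μ s).toReal ^ (1 / (2:ℝ≥0∞).toReal)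
      = (μ s).toReal ^ (1 / (2:ℝ≥0∞).toReal) := by simp
    _ ≤ 1 := Real.rpow_le_one ENNReal.toReal_nonneg h1 (by norm_num)

/-- Identification of the orthogonal projection onto the fixed space of the Koopman
operator with the conditional expectation w.r.t. the invariant σ-algebra. -/
lemma coe_orthogonalProjection_koopman_ae_eq_condexp {T : X → X}
    (hT : MeasurePreserving T μ μ) (f : Lp ℝ 2 μ) :
    (↑(Submodule.orthogonalProjection ((koopman μ T hT).eqLocus (1 : Lp ℝ 2 μ →L[ℝ] Lp ℝ 2 μ)) f) : Lp ℝ 2 μ)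
      =ᵐ[μ] μ[⇑f | invariantAlgebra T] := by
  set g : Lp ℝ 2 μ := ↑(Submodule.orthogonalProjection ((koopman μ T hT).eqLocus (1 : Lp ℝ 2 μ →L[ℝ] Lp ℝ 2 μ)) f) with hg
  have hm : invariantAlgebra T ≤ mX := invariantAlgebra_le T
  haveI : SigmaFinite (μ.trim hm) := by infer_instance
  have hgfix : koopman μ T hT g = g := by
    have h2 := LinearMap.mem_eqLocus.mp
      (Submodule.orthogonalProjection ((koopman μ T hT).eqLocus (1 : Lp ℝ 2 μ →L[ℝ] Lp ℝ 2 μ)) f).2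
    exact h2
  refine ae_eq_condExp_of_forall_setIntegral_eq hm ((Lp.memLp f).integrable one_le_two)
    (fun s _ _ => ((Lp.memLp g).integrable one_le_two).integrableOn) (fun s hs hμs => ?_) ?_
  · rw [invariantAlgebra_measurableSet_iff] at hs
    set i := indicatorConstLp 2 hs.1 (measure_ne_top μ s) (1 : ℝ) with hi
    have hifix : koopman μ T hT i = i := by
      rw [hi, koopman_apply, Lp.indicatorConstLp_compMeasurePreserving]
      exact indicatorConstLp_congr_set hs.2 _ _ _ _ _
    have hmem : i ∈ (koopman μ T hT).eqLocus (1 : Lp ℝ 2 μ →L[ℝ] Lp ℝ 2 μ) := by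
      rw [LinearMap.mem_eqLocus]; simpa using hifix
    have horth : ⟪f - g, i⟫ = 0 := Submodule.starProjection_inner_eq_zero f i hmem
    rw [inner_sub_left, sub_eq_zero] at horth
    rw [← L2.inner_indicatorConstLp_one hs.1 (measure_ne_top μ s) g,
      ← L2.inner_indicatorConstLp_one hs.1 (measure_ne_top μ s) f]
    rw [real_inner_comm i g, real_inner_comm i f] at *
    exact horth.symm
  · have h1 : ⇑g ∘ T =ᵐ[μ] ⇑g := by
      have h2 := koopman_coeFn hT g
      rw [hgfix] at h2
      exact h2.symm
    exact aestronglyMeasurable'_of_ae_invariant hT (Lp.stronglyMeasurable g).measurable h1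

/-- The von Neumann mean ergodic theorem for averages over `Icc 1 N`. -/
lemma tendsto_average_Icc {T : X → X} (hT : MeasurePreserving T μ μ) (f : Lp ℝ 2 μ) :
    Tendsto (fun N : ℕ => (N : ℝ)⁻¹ • ∑ n ∈ Icc 1 N, (koopman μ T hT)^[n] f) atTop
      (𝓝 ↑(Submodule.orthogonalProjection ((koopman μ T hT).eqLocus (1 : Lp ℝ 2 μ →L[ℝ] Lp ℝ 2 μ)) f)) := by
  set U := koopman μ T hT with hU
  set p : Lp ℝ 2 μ := ↑(Submodule.orthogonalProjection (U.eqLocus (1 : Lp ℝ 2 μ →L[ℝ] Lp ℝ 2 μ)) f) with hp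
  have hmet : Tendsto (fun N => birkhoffAverage ℝ U _root_.id N f) atTop (𝓝 p) :=
    U.tendsto_birkhoffAverage_orthogonalProjection (koopman_norm_le hT) f
  have hpfix : U p = p := by
    have h2 := LinearMap.mem_eqLocus.mp (Submodule.orthogonalProjection (U.eqLocus (1 : Lp ℝ 2 μ →L[ℝ] Lp ℝ 2 μ)) f).2
    exact h2
  have hcont : Tendsto (fun N => U (birkhoffAverage ℝ U _root_.id N f)) atTop (𝓝 (U p)) :=
    (U.continuous.tendsto p).comp hmet
  rw [hpfix] at hcont
  convert hcont using 2 with N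
  rw [birkhoffAverage, birkhoffSum, _root_.map_smul, map_sum]
  congr 1
  rw [← Finset.Ico_add_one_right_eq_Icc, Finset.sum_Ico_eq_sum_range]
  simp only [Nat.add_sub_cancel]
  refine Finset.sum_congr rfl fun k _ => ?_
  rw [Nat.add_comm 1 k, Function.iterate_succ_apply' U k f, id_eq]

end Aux2

/-- **Extension of Khintchine's recurrence theorem (Corollary 1, identification of
the limit):** the averages `(1/N²) ∑_{n,m=1}^N μ(A ∩ T₁⁻ⁿA ∩ T₂^{-(n+m)}A)`
converge to `∫_A E(1_A | I₁) · E(1_A | I₂) dμ`. -/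
theorem tendsto_recurrence_averages_eq_integral_condexp
    {X : Type*} [mX : MeasurableSpace X] (μ : Measure X) [IsProbabilityMeasure μ]
    (T₁ T₂ : X → X)
    (hT₁ : MeasurePreserving T₁ μ μ) (hT₂ : MeasurePreserving T₂ μ μ)
    (A : Set X) (hA : MeasurableSet A) :
    Tendsto (fun N : ℕ =>
        (1 / (N : ℝ) ^ 2) * ∑ n ∈ Finset.Icc 1 N, ∑ m ∈ Finset.Icc 1 N,
          (μ (A ∩ T₁^[n] ⁻¹' A ∩ T₂^[n + m] ⁻¹' A)).toReal)
      atTop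
      (nhds (∫ x in A,
        (μ[A.indicator (fun _ => (1 : ℝ)) | invariantAlgebra T₁]) x *
        (μ[A.indicator (fun _ => (1 : ℝ)) | invariantAlgebra T₂]) x ∂μ)) := by
  have hT1m := hT₁.measurable
  have hT2m := hT₂.measurable
  set U₁ := koopman μ T₁ hT₁ with hU₁
  set U₂ := koopman μ T₂ hT₂ with hU₂
  set f : Lp ℝ 2 μ := indicatorConstLp 2 hA (measure_ne_top μ A) (1 : ℝ) with hf
  set p₁ : Lp ℝ 2 μ := ↑(Submodule.orthogonalProjection (U₁.eqLocus (1 : Lp ℝ 2 μ →L[ℝ] Lp ℝ 2 μ)) f) with hp₁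
  set p₂ : Lp ℝ 2 μ := ↑(Submodule.orthogonalProjection (U₂.eqLocus (1 : Lp ℝ 2 μ →L[ℝ] Lp ℝ 2 μ)) f) with hp₂
  set L : ℝ := ∫ x in A,
      (μ[A.indicator (fun _ => (1 : ℝ)) | invariantAlgebra T₁]) x *
      (μ[A.indicator (fun _ => (1 : ℝ)) | invariantAlgebra T₂]) x ∂μ with hL
  have hp₂fix : U₂ p₂ = p₂ := by
    have h2 := LinearMap.mem_eqLocus.mp (Submodule.orthogonalProjection (U₂.eqLocus (1 : Lp ℝ 2 μ →L[ℝ] Lp ℝ 2 μ)) f).2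
    exact h2
  have hcond₁ : ⇑p₁ =ᵐ[μ] μ[A.indicator (fun _ => (1 : ℝ)) | invariantAlgebra T₁] :=
    (coe_orthogonalProjection_koopman_ae_eq_condexp hT₁ f).trans
      (condExp_congr_ae indicatorConstLp_coeFn)
  have hcond₂ : ⇑p₂ =ᵐ[μ] μ[A.indicator (fun _ => (1 : ℝ)) | invariantAlgebra T₂] :=
    (coe_orthogonalProjection_koopman_ae_eq_condexp hT₂ f).trans
      (condExp_congr_ae indicatorConstLp_coeFn)
  have hq : MemLp (A.indicator ⇑p₂) 2 μ := (Lp.memLp p₂).indicator hA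
  set q : Lp ℝ 2 μ := hq.toLp (A.indicator ⇑p₂) with hqdef
  have hqcoe : ⇑q =ᵐ[μ] A.indicator ⇑p₂ := hq.coeFn_toLp
  set hN : ℕ → Lp ℝ 2 μ := fun N => (N : ℝ)⁻¹ • ∑ n ∈ Icc 1 N, U₁^[n] f with hhNdef
  set gN : ℕ → Lp ℝ 2 μ := fun N => (N : ℝ)⁻¹ • ∑ m ∈ Icc 1 N, U₂^[m] f with hgNdef
  have hhN : Tendsto hN atTop (𝓝 p₁) := tendsto_average_Icc hT₁ f
  have hgN : Tendsto gN atTop (𝓝 p₂) := tendsto_average_Icc hT₂ f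
  -- the limit value
  have hqp₁ : ⟪q, p₁⟫ = L := by
    rw [L2.inner_def]
    have h1 : ∫ x, ⟪q x, p₁ x⟫ ∂μ = ∫ x, A.indicator (fun y => p₁ y * p₂ y) x ∂μ := by
      refine integral_congr_ae ?_
      filter_upwards [hqcoe] with x hx
      rw [RCLike.inner_apply, conj_trivial, hx]
      by_cases hxA : x ∈ A
      · simp [Set.indicator_of_mem hxA, mul_comm]
      · simp [Set.indicator_of_notMem hxA]
    rw [h1, integral_indicator hA, hL]
    refine setIntegral_congr_ae hA ?_
    filter_upwards [hcond₁, hcond₂] with x h1 h2 _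
    rw [h1, h2]
  have hC2 : Tendsto (fun N => ⟪q, hN N⟫) atTop (𝓝 L) := by
    rw [← hqp₁]
    exact tendsto_const_nhds.inner hhN
  have hC3 : Tendsto (fun N => ‖gN N - p₂‖) atTop (𝓝 0) := by
    have h2 : Tendsto (fun N => gN N - p₂) atTop (𝓝 (p₂ - p₂)) :=
      hgN.sub tendsto_const_nhds
    rw [sub_self] at h2
    simpa using h2.norm
  -- the key estimate
  have key : ∀ N : ℕ, 1 ≤ N →
      |(1 / (N : ℝ) ^ 2) * ∑ n ∈ Finset.Icc 1 N, ∑ m ∈ Finset.Icc 1 N,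
          (μ (A ∩ T₁^[n] ⁻¹' A ∩ T₂^[n + m] ⁻¹' A)).toReal - ⟪q, hN N⟫| ≤ ‖gN N - p₂‖ := by
    intro N hN1
    have hNne : (N : ℝ) ≠ 0 := Nat.cast_ne_zero.mpr (by omega)
    set s : ℕ → Set X := fun n => A ∩ T₁^[n] ⁻¹' A with hs
    have hsm : ∀ n, MeasurableSet (s n) := fun n => hA.inter (hA.preimage (hT1m.iterate n))
    set e : ℕ → Lp ℝ 2 μ := fun n =>
      indicatorConstLp 2 (hsm n) (measure_ne_top μ (s n)) (1 : ℝ) with he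
    set w : ℕ → Lp ℝ 2 μ := fun n => (N : ℝ)⁻¹ • ∑ m ∈ Icc 1 N, U₂^[n + m] f with hw
    -- Step A
    have stepA : (1 / (N : ℝ) ^ 2) * ∑ n ∈ Finset.Icc 1 N, ∑ m ∈ Finset.Icc 1 N,
          (μ (A ∩ T₁^[n] ⁻¹' A ∩ T₂^[n + m] ⁻¹' A)).toReal
        = (N : ℝ)⁻¹ * ∑ n ∈ Icc 1 N, ⟪e n, w n⟫ := by
      have h1 : ∀ n, ⟪e n, w n⟫ = (N : ℝ)⁻¹ * ∑ m ∈ Icc 1 N,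
          (μ (A ∩ T₁^[n] ⁻¹' A ∩ T₂^[n + m] ⁻¹' A)).toReal := by
        intro n
        rw [hw]
        simp only [real_inner_smul_right]
        congr 1
        rw [inner_sum]
        refine Finset.sum_congr rfl fun m _ => ?_
        rw [hf, koopman_iterate_indicator hT₂ hA (n + m), he,
          inner_indicatorConstLp_indicatorConstLp]
      rw [Finset.sum_congr rfl fun n _ => h1 n, ← Finset.mul_sum]
      rw [← mul_assoc, one_div, sq, mul_inv]
    -- Step B: w n = U₂^[n] (gN N)
    have stepB : ∀ n, U₂^[n] (gN N) = w n := by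
      intro n
      have hpow : ⇑(U₂ ^ n) = U₂^[n] := FunLike.coe_pow_eq_iterate U₂ n
      rw [← hpow, hgNdef, hw]
      simp only [_root_.map_smul, map_sum]
      congr 1
      refine Finset.sum_congr rfl fun m _ => ?_
      rw [hpow, ← Function.iterate_add_apply]
    -- Step C: per-n bound
    have stepC : ∀ n, |⟪e n, w n⟫ - ⟪e n, p₂⟫| ≤ ‖gN N - p₂‖ := by
      intro n
      rw [← inner_sub_right]
      have hnorm : ‖w n - p₂‖ = ‖gN N - p₂‖ := by
        have hfix : U₂^[n] p₂ = p₂ := Function.IsFixedPt.iterate hp₂fix n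
        have hpow : ⇑(U₂ ^ n) = U₂^[n] := FunLike.coe_pow_eq_iterate U₂ n
        have h4 : U₂^[n] (gN N - p₂) = w n - p₂ := by
          rw [← hpow, map_sub, hpow, stepB n, hfix]
        rw [← h4, koopman_iterate_norm]
      calc |⟪e n, w n - p₂⟫| ≤ ‖e n‖ * ‖w n - p₂‖ := abs_real_inner_le_norm _ _
        _ ≤ 1 * ‖w n - p₂‖ :=
          mul_le_mul_of_nonneg_right (norm_indicatorConstLp_le_one (hsm n)) (norm_nonneg _)
        _ = ‖gN N - p₂‖ := by rw [one_mul, hnorm]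
    -- Step D: ⟪e n, p₂⟫ = ⟪q, U₁^[n] f⟫
    have stepD : ∀ n, ⟪e n, p₂⟫ = ⟪q, U₁^[n] f⟫ := by
      intro n
      have h0 : U₁^[n] f = indicatorConstLp 2 (hA.preimage (hT1m.iterate n))
          (measure_ne_top μ _) (1 : ℝ) := by
        rw [hf]; exact koopman_iterate_indicator hT₁ hA n
      have h1 : ⟪e n, p₂⟫ = ∫ x in s n, p₂ x ∂μ :=
        L2.inner_indicatorConstLp_one (hsm n) (measure_ne_top μ (s n)) p₂
      have h2 : ⟪q, U₁^[n] f⟫ = ∫ x in T₁^[n] ⁻¹' A, q x ∂μ := by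
        rw [h0, real_inner_comm]
        exact L2.inner_indicatorConstLp_one (hA.preimage (hT1m.iterate n))
          (measure_ne_top μ _) q
      have h3 : ∫ x in T₁^[n] ⁻¹' A, q x ∂μ =
          ∫ x in T₁^[n] ⁻¹' A, A.indicator ⇑p₂ x ∂μ :=
        integral_congr_ae (ae_restrict_of_ae hqcoe)
      rw [h1, h2, h3, setIntegral_indicator hA, Set.inter_comm (T₁^[n] ⁻¹' A) A]
    -- Step E
    have stepE : ⟪q, hN N⟫ = (N : ℝ)⁻¹ * ∑ n ∈ Icc 1 N, ⟪e n, p₂⟫ := by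
      rw [hhNdef]
      simp only [real_inner_smul_right]
      congr 1
      rw [inner_sum]
      exact Finset.sum_congr rfl fun n _ => (stepD n).symm
    -- assemble
    rw [stepA, stepE, ← mul_sub, ← Finset.sum_sub_distrib]
    rw [abs_mul, abs_of_nonneg (inv_nonneg.mpr (Nat.cast_nonneg N))]
    calc (N : ℝ)⁻¹ * |∑ n ∈ Icc 1 N, (⟪e n, w n⟫ - ⟪e n, p₂⟫)|
        ≤ (N : ℝ)⁻¹ * ∑ n ∈ Icc 1 N, |⟪e n, w n⟫ - ⟪e n, p₂⟫| :=
          mul_le_mul_of_nonneg_left (Finset.abs_sum_le_sum_abs _ _)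
            (inv_nonneg.mpr (Nat.cast_nonneg N))
      _ ≤ (N : ℝ)⁻¹ * ∑ _n ∈ Icc 1 N, ‖gN N - p₂‖ :=
          mul_le_mul_of_nonneg_left (Finset.sum_le_sum fun n _ => stepC n)
            (inv_nonneg.mpr (Nat.cast_nonneg N))
      _ = ‖gN N - p₂‖ := by
          rw [Finset.sum_const, Nat.card_Icc]
          simp only [Nat.add_sub_cancel, nsmul_eq_mul]
          rw [← mul_assoc, inv_mul_cancel₀ hNne, one_mul]
  -- final assembly
  have hdiff : Tendsto (fun N : ℕ => (1 / (N : ℝ) ^ 2) * ∑ n ∈ Finset.Icc 1 N,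
      ∑ m ∈ Finset.Icc 1 N, (μ (A ∩ T₁^[n] ⁻¹' A ∩ T₂^[n + m] ⁻¹' A)).toReal
      - ⟪q, hN N⟫) atTop (𝓝 0) := by
    refine squeeze_zero_norm' ?_ hC3
    filter_upwards [eventually_ge_atTop 1] with N h1
    simpa [Real.norm_eq_abs] using key N h1
  have hfinal := hC2.add hdiff
  rw [add_zero] at hfinal
  convert hfinal using 2 with N
  ring
end

section
/- Let (X, B, μ) be a probability measure space, T₁ and T₂ two measure preserving transformations of (X, B, μ), and let I₁ and I₂ denote the sub-σ-algebras of B consisting of T₁-invariant and T₂-invariant sets respectively. If I₁ ⊆ I₂ (up to μ-null sets), then for every measurable set A, ∫_A E(1_A | I₁)(x) · E(1_A | I₂)(x) dμ(x) ≥ μ(A)³. -/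
open MeasureTheory Filter Finset

/-- An a.e. bounded a.e. strongly measurable function is integrable over a finite measure. -/
lemma aux_integrable_of_bound {X : Type*} [MeasurableSpace X] {μ : Measure X}
    [IsFiniteMeasure μ] {h : X → ℝ} (hm : AEStronglyMeasurable h μ) (C : ℝ)
    (hb : ∀ᵐ x ∂μ, |h x| ≤ C) : Integrable h μ :=
  Integrable.mono' (integrable_const C) hm (by simpa [Real.norm_eq_abs] using hb)

/-- If the invariant σ-algebra of `T₁` is contained (up to `μ`-null sets) in that
of `T₂`, then `∫_A E(1_A | I₁) · E(1_A | I₂) dμ ≥ μ(A)³`. -/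
theorem integral_condexp_mul_condexp_ge_cube
    {X : Type*} [mX : MeasurableSpace X] (μ : Measure X) [IsProbabilityMeasure μ]
    (T₁ T₂ : X → X)
    (hT₁ : MeasurePreserving T₁ μ μ) (hT₂ : MeasurePreserving T₂ μ μ)
    (hI : ∀ B : Set X, MeasurableSet[invariantAlgebra T₁] B →
      ∃ B' : Set X, MeasurableSet[invariantAlgebra T₂] B' ∧ μ (symmDiff B B') = 0)
    (A : Set X) (hA : MeasurableSet A) :
    (μ A).toReal ^ 3 ≤
      ∫ x in A,
        (μ[A.indicator (fun _ => (1 : ℝ)) | invariantAlgebra T₁]) x *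
        (μ[A.indicator (fun _ => (1 : ℝ)) | invariantAlgebra T₂]) x ∂μ := by
  have hm₁ : (invariantAlgebra T₁) ≤ mX := fun s hs => hs.1
  have hm₂ : (invariantAlgebra T₂) ≤ mX := fun s hs => hs.1
  set f : X → ℝ := A.indicator (fun _ => (1 : ℝ)) with hfdef
  have hf_int : Integrable f μ := (integrable_const (1 : ℝ)).indicator hA
  have hf_nonneg : ∀ x, 0 ≤ f x := fun x => Set.indicator_nonneg (fun _ _ => zero_le_one) x
  have hf_le_one : ∀ x, f x ≤ 1 := fun x => Set.indicator_le_self' (fun _ _ => zero_le_one) x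
  set g₁ : X → ℝ := μ[f | (invariantAlgebra T₁)] with hg₁def
  set g₂ : X → ℝ := μ[f | (invariantAlgebra T₂)] with hg₂def
  have hg₁m : StronglyMeasurable[(invariantAlgebra T₁)] g₁ := stronglyMeasurable_condExp
  have hg₂m : StronglyMeasurable[(invariantAlgebra T₂)] g₂ := stronglyMeasurable_condExp
  have hg₁_int : Integrable g₁ μ := integrable_condExp
  have hg₂_int : Integrable g₂ μ := integrable_condExp
  have hg₁_nonneg : 0 ≤ᵐ[μ] g₁ := condExp_nonneg (ae_of_all μ hf_nonneg)
  have hg₂_nonneg : 0 ≤ᵐ[μ] g₂ := condExp_nonneg (ae_of_all μ hf_nonneg)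
  have hone₁ : μ[(fun _ => (1 : ℝ)) | (invariantAlgebra T₁)] = fun _ => (1 : ℝ) := condExp_const hm₁ 1
  have hone₂ : μ[(fun _ => (1 : ℝ)) | (invariantAlgebra T₂)] = fun _ => (1 : ℝ) := condExp_const hm₂ 1
  have hg₁_le_one : g₁ ≤ᵐ[μ] fun _ => (1 : ℝ) := by
    have := condExp_mono (m := (invariantAlgebra T₁)) hf_int (integrable_const 1) (ae_of_all μ hf_le_one)
    rwa [hone₁] at this
  have hg₂_le_one : g₂ ≤ᵐ[μ] fun _ => (1 : ℝ) := by
    have := condExp_mono (m := (invariantAlgebra T₂)) hf_int (integrable_const 1) (ae_of_all μ hf_le_one)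
    rwa [hone₂] at this
  -- boundedness helpers
  have habs₁ : ∀ᵐ x ∂μ, |g₁ x| ≤ 1 := by
    filter_upwards [hg₁_nonneg, hg₁_le_one] with x h0 h1
    rw [abs_of_nonneg h0]; exact h1
  have habs₂ : ∀ᵐ x ∂μ, |g₂ x| ≤ 1 := by
    filter_upwards [hg₂_nonneg, hg₂_le_one] with x h0 h1
    rw [abs_of_nonneg h0]; exact h1
  have hint_fg₂ : Integrable (f * g₂) μ := by
    refine aux_integrable_of_bound (hf_int.aestronglyMeasurable.mul hg₂_int.aestronglyMeasurable) 1 ?_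
    filter_upwards [habs₂] with x h2
    calc |f x * g₂ x| = |f x| * |g₂ x| := abs_mul _ _
    _ ≤ 1 * 1 := by
        refine mul_le_mul ?_ h2 (abs_nonneg _) zero_le_one
        rw [abs_of_nonneg (hf_nonneg x)]; exact hf_le_one x
    _ = 1 := one_mul 1
  have hint_g₂g₂ : Integrable (g₂ * g₂) μ := by
    refine aux_integrable_of_bound (hg₂_int.aestronglyMeasurable.mul hg₂_int.aestronglyMeasurable) 1 ?_
    filter_upwards [habs₂] with x h2
    calc |g₂ x * g₂ x| = |g₂ x| * |g₂ x| := abs_mul _ _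
    _ ≤ 1 * 1 := mul_le_mul h2 h2 (abs_nonneg _) zero_le_one
    _ = 1 := one_mul 1
  have hint_g₁g₂ : Integrable (g₁ * g₂) μ := by
    refine aux_integrable_of_bound (hg₁_int.aestronglyMeasurable.mul hg₂_int.aestronglyMeasurable) 1 ?_
    filter_upwards [habs₁, habs₂] with x h1 h2
    calc |g₁ x * g₂ x| = |g₁ x| * |g₂ x| := abs_mul _ _
    _ ≤ 1 * 1 := mul_le_mul h1 h2 (abs_nonneg _) zero_le_one
    _ = 1 := one_mul 1
  have hint_g₁g₁ : Integrable (g₁ * g₁) μ := by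
    refine aux_integrable_of_bound (hg₁_int.aestronglyMeasurable.mul hg₁_int.aestronglyMeasurable) 1 ?_
    filter_upwards [habs₁] with x h1
    calc |g₁ x * g₁ x| = |g₁ x| * |g₁ x| := abs_mul _ _
    _ ≤ 1 * 1 := mul_le_mul h1 h1 (abs_nonneg _) zero_le_one
    _ = 1 := one_mul 1
  -- For any (invariantAlgebra T₁)-measurable set s: ∫_s f·g₂ = ∫_s g₂·g₂ and ∫_s g₂ = ∫_s f
  have key : ∀ s : Set X, MeasurableSet[(invariantAlgebra T₁)] s →
      (∫ x in s, (f * g₂) x ∂μ = ∫ x in s, (g₂ * g₂) x ∂μ) ∧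
      (∫ x in s, g₂ x ∂μ = ∫ x in s, f x ∂μ) := by
    intro s hs
    obtain ⟨s', hs', hnull⟩ := hI s hs
    have hse : s =ᵐ[μ] s' := measure_symmDiff_eq_zero_iff.mp hnull
    have hs'X : MeasurableSet s' := hm₂ s' hs'
    constructor
    · have h1 : ∫ x in s, (f * g₂) x ∂μ = ∫ x in s', (f * g₂) x ∂μ :=
        setIntegral_congr_set hse
      -- indicator of s' times g₂ is (invariantAlgebra T₂)-strongly measurable
      set h : X → ℝ := s'.indicator g₂ with hhdef
      have hhm : StronglyMeasurable[(invariantAlgebra T₂)] h := hg₂m.indicator hs'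
      have e1 : ∫ x in s', (f * g₂) x ∂μ = ∫ x, (h * f) x ∂μ := by
        rw [← integral_indicator hs'X]
        congr 1
        funext x
        by_cases hx : x ∈ s' <;> simp [h, hx, mul_comm]
      have hint_hf : Integrable (h * f) μ := by
        refine aux_integrable_of_bound
          (((hg₂_int.aestronglyMeasurable.indicator hs'X)).mul hf_int.aestronglyMeasurable) 1 ?_
        filter_upwards [habs₂] with x h2
        calc |h x * f x| = |h x| * |f x| := abs_mul _ _
        _ ≤ 1 * 1 := by
            refine mul_le_mul ?_ ?_ (abs_nonneg _) zero_le_one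
            · by_cases hx : x ∈ s' <;> simp [h, hx, h2]
            · rw [abs_of_nonneg (hf_nonneg x)]; exact hf_le_one x
        _ = 1 := one_mul 1
      have e2 : ∫ x, (h * f) x ∂μ = ∫ x, (h * g₂) x ∂μ := by
        rw [← integral_condExp hm₂ (f := h * f)]
        exact integral_congr_ae (condExp_mul_of_stronglyMeasurable_left hhm hint_hf hf_int)
      have e3 : ∫ x, (h * g₂) x ∂μ = ∫ x in s', (g₂ * g₂) x ∂μ := by
        rw [← integral_indicator hs'X]
        congr 1
        funext x
        by_cases hx : x ∈ s' <;> simp [h, hx]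
      rw [h1, e1, e2, e3, setIntegral_congr_set hse]
    · rw [setIntegral_congr_set hse, setIntegral_congr_set hse,
        setIntegral_condExp hm₂ hf_int hs']
  -- tower: g₁ = E[g₂ | (invariantAlgebra T₁)]
  have htower : g₁ =ᵐ[μ] μ[g₂ | (invariantAlgebra T₁)] := by
    refine ae_eq_condExp_of_forall_setIntegral_eq hm₁ hg₂_int
      (fun s _ _ => hg₁_int.integrableOn) (fun s hs _ => ?_)
      (hg₁m.aestronglyMeasurable)
    rw [(key s hs).2, hg₁def, setIntegral_condExp hm₁ hf_int hs]
  -- E[f·g₂ | (invariantAlgebra T₁)] = E[g₂·g₂ | (invariantAlgebra T₁)]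
  have hBig : μ[g₂ * g₂ | (invariantAlgebra T₁)] =ᵐ[μ] μ[f * g₂ | (invariantAlgebra T₁)] := by
    refine ae_eq_condExp_of_forall_setIntegral_eq hm₁ hint_fg₂
      (fun s _ _ => integrable_condExp.integrableOn) (fun s hs _ => ?_)
      (stronglyMeasurable_condExp.aestronglyMeasurable)
    rw [setIntegral_condExp hm₁ hint_g₂g₂ hs, (key s hs).1]
  -- conditional Cauchy–Schwarz: g₁·g₁ ≤ E[g₂·g₂ | (invariantAlgebra T₁)] a.e.
  have hCS : g₁ * g₁ ≤ᵐ[μ] μ[g₂ * g₂ | (invariantAlgebra T₁)] := by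
    have hsq_int : Integrable ((g₂ - g₁) * (g₂ - g₁)) μ := by
      refine aux_integrable_of_bound
        ((hg₂_int.aestronglyMeasurable.sub hg₁_int.aestronglyMeasurable).mul
          (hg₂_int.aestronglyMeasurable.sub hg₁_int.aestronglyMeasurable)) 4 ?_
      filter_upwards [habs₁, habs₂] with x h1 h2
      have hd : |g₂ x - g₁ x| ≤ 2 := by
        calc |g₂ x - g₁ x| ≤ |g₂ x| + |g₁ x| := abs_sub _ _
        _ ≤ 1 + 1 := add_le_add h2 h1
        _ = 2 := by norm_num
      calc |(g₂ x - g₁ x) * (g₂ x - g₁ x)| = |g₂ x - g₁ x| * |g₂ x - g₁ x| := abs_mul _ _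
      _ ≤ 2 * 2 := mul_le_mul hd hd (abs_nonneg _) (by norm_num)
      _ = 4 := by norm_num
    have h0 : 0 ≤ᵐ[μ] μ[(g₂ - g₁) * (g₂ - g₁) | (invariantAlgebra T₁)] :=
      condExp_nonneg (ae_of_all μ fun x => mul_self_nonneg _)
    have hexpand : (g₂ - g₁) * (g₂ - g₁) = (g₂ * g₂ - g₁ * g₂) - (g₁ * g₂ - g₁ * g₁) := by
      funext x; simp only [Pi.mul_apply, Pi.sub_apply]; ring
    have hpull : μ[g₁ * g₂ | (invariantAlgebra T₁)] =ᵐ[μ] g₁ * g₁ := by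
      refine (condExp_mul_of_stronglyMeasurable_left hg₁m hint_g₁g₂ hg₂_int).trans ?_
      filter_upwards [htower] with x hx
      simp only [Pi.mul_apply]
      rw [← hx]
    have hpull' : μ[g₁ * g₁ | (invariantAlgebra T₁)] =ᵐ[μ] g₁ * g₁ := by
      rw [condExp_of_stronglyMeasurable hm₁ (hg₁m.mul hg₁m) hint_g₁g₁]
    have hlin : μ[(g₂ - g₁) * (g₂ - g₁) | (invariantAlgebra T₁)] =ᵐ[μ]
        (μ[g₂ * g₂ | (invariantAlgebra T₁)] - μ[g₁ * g₂ | (invariantAlgebra T₁)]) - (μ[g₁ * g₂ | (invariantAlgebra T₁)] - μ[g₁ * g₁ | (invariantAlgebra T₁)]) := by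
      rw [hexpand]
      refine (condExp_sub (hint_g₂g₂.sub hint_g₁g₂) (hint_g₁g₂.sub hint_g₁g₁) _).trans ?_
      exact EventuallyEq.sub (condExp_sub hint_g₂g₂ hint_g₁g₂ _) (condExp_sub hint_g₁g₂ hint_g₁g₁ _)
    filter_upwards [h0, hlin, hpull, hpull'] with x h0x hlx hpx hpx'
    simp only [Pi.sub_apply, Pi.mul_apply, Pi.zero_apply] at hlx hpx hpx' h0x ⊢
    rw [hlx, hpx, hpx'] at h0x
    linarith
  -- bound E[g₂·g₂|(invariantAlgebra T₁)] above by 1 for integrability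
  have hcond_le_one : μ[g₂ * g₂ | (invariantAlgebra T₁)] ≤ᵐ[μ] fun _ => (1 : ℝ) := by
    have := condExp_mono (m := (invariantAlgebra T₁)) hint_g₂g₂ (integrable_const 1) ?_
    · rwa [hone₁] at this
    · filter_upwards [habs₂] with x h2
      calc g₂ x * g₂ x ≤ |g₂ x * g₂ x| := le_abs_self _
      _ = |g₂ x| * |g₂ x| := abs_mul _ _
      _ ≤ 1 * 1 := mul_le_mul h2 h2 (abs_nonneg _) zero_le_one
      _ = 1 := one_mul 1
  have hcond_nonneg : 0 ≤ᵐ[μ] μ[g₂ * g₂ | (invariantAlgebra T₁)] :=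
    condExp_nonneg (ae_of_all μ fun x => mul_self_nonneg _)
  have hint_g₁cond : Integrable (g₁ * μ[g₂ * g₂ | (invariantAlgebra T₁)]) μ := by
    refine aux_integrable_of_bound
      (hg₁_int.aestronglyMeasurable.mul integrable_condExp.aestronglyMeasurable) 1 ?_
    filter_upwards [habs₁, hcond_le_one, hcond_nonneg] with x h1 hc1 hc0
    calc |g₁ x * (μ[g₂ * g₂ | (invariantAlgebra T₁)]) x| = |g₁ x| * |(μ[g₂ * g₂ | (invariantAlgebra T₁)]) x| := abs_mul _ _
    _ ≤ 1 * 1 := mul_le_mul h1 (by rw [abs_of_nonneg hc0]; exact hc1) (abs_nonneg _) zero_le_one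
    _ = 1 := one_mul 1
  have hint_cube : Integrable (fun x => g₁ x * (g₁ x * g₁ x)) μ := by
    refine aux_integrable_of_bound
      (hg₁_int.aestronglyMeasurable.mul
        (hg₁_int.aestronglyMeasurable.mul hg₁_int.aestronglyMeasurable)) 1 ?_
    filter_upwards [habs₁] with x h1
    calc |g₁ x * (g₁ x * g₁ x)| = |g₁ x| * (|g₁ x| * |g₁ x|) := by rw [abs_mul, abs_mul]
    _ ≤ 1 * (1 * 1) := by
        refine mul_le_mul h1 (mul_le_mul h1 h1 (abs_nonneg _) zero_le_one) ?_ zero_le_one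
        positivity
    _ = 1 := by norm_num
  -- integrability of f·(g₁·g₂)
  have hint_fg₁g₂ : Integrable (fun x => g₁ x * (f x * g₂ x)) μ := by
    refine aux_integrable_of_bound
      (hg₁_int.aestronglyMeasurable.mul
        (hf_int.aestronglyMeasurable.mul hg₂_int.aestronglyMeasurable)) 1 ?_
    filter_upwards [habs₁, habs₂] with x h1 h2
    have hfx : |f x| ≤ 1 := by rw [abs_of_nonneg (hf_nonneg x)]; exact hf_le_one x
    calc |g₁ x * (f x * g₂ x)| = |g₁ x| * (|f x| * |g₂ x|) := by rw [abs_mul, abs_mul]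
    _ ≤ 1 * (1 * 1) := by
        refine mul_le_mul h1 (mul_le_mul hfx h2 (abs_nonneg _) zero_le_one) ?_ zero_le_one
        positivity
    _ = 1 := by norm_num
  -- now the chain of (in)equalities
  set t : ℝ := (μ A).toReal with htdef
  have ht_nonneg : 0 ≤ t := ENNReal.toReal_nonneg
  have hstep1 : ∫ x in A, g₁ x * g₂ x ∂μ = ∫ x, g₁ x * (f x * g₂ x) ∂μ := by
    rw [← integral_indicator hA]
    congr 1
    funext x
    by_cases hx : x ∈ A <;> simp [f, hx]
  have hstep2 : ∫ x, g₁ x * (f x * g₂ x) ∂μ = ∫ x, g₁ x * (μ[f * g₂ | (invariantAlgebra T₁)]) x ∂μ := by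
    have : (fun x => g₁ x * (f x * g₂ x)) = g₁ * (f * g₂) := rfl
    rw [this, ← integral_condExp hm₁ (f := g₁ * (f * g₂))]
    exact integral_congr_ae (condExp_mul_of_stronglyMeasurable_left hg₁m (by rwa [← this]) hint_fg₂)
  have hstep3 : ∫ x, g₁ x * (μ[f * g₂ | (invariantAlgebra T₁)]) x ∂μ = ∫ x, g₁ x * (μ[g₂ * g₂ | (invariantAlgebra T₁)]) x ∂μ := by
    refine integral_congr_ae ?_
    filter_upwards [hBig] with x hx
    rw [← hx]
  have hstep4 : ∫ x, g₁ x * (g₁ x * g₁ x) ∂μ ≤ ∫ x, g₁ x * (μ[g₂ * g₂ | (invariantAlgebra T₁)]) x ∂μ := by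
    refine integral_mono_ae hint_cube hint_g₁cond ?_
    filter_upwards [hg₁_nonneg, hCS] with x h0 hcs
    exact mul_le_mul_of_nonneg_left hcs h0
  have hintf : ∫ x, f x ∂μ = t := by
    rw [hfdef, integral_indicator_const _ hA]
    simp [htdef, Measure.real]
  have hintg₁ : ∫ x, g₁ x ∂μ = t := by rw [hg₁def, integral_condExp hm₁, hintf]
  have hstep5 : t ^ 3 ≤ ∫ x, g₁ x * (g₁ x * g₁ x) ∂μ := by
    have hptwise : ∀ᵐ x ∂μ, 3 * t ^ 2 * g₁ x - 2 * t ^ 3 ≤ g₁ x * (g₁ x * g₁ x) := by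
      filter_upwards [hg₁_nonneg] with x h0
      nlinarith [sq_nonneg (g₁ x - t), sq_nonneg (g₁ x + t), mul_nonneg h0 (sq_nonneg (g₁ x - t))]
    have hsub_int : Integrable (fun x => 3 * t ^ 2 * g₁ x - 2 * t ^ 3) μ :=
      (hg₁_int.const_mul (3 * t ^ 2)).sub (integrable_const (2 * t ^ 3))
    have hmono := integral_mono_ae hsub_int hint_cube hptwise
    have e : ∫ x, (3 * t ^ 2 * g₁ x - 2 * t ^ 3) ∂μ = 3 * t ^ 2 * t - 2 * t ^ 3 := by
      rw [integral_sub (hg₁_int.const_mul _) (integrable_const _), integral_const_mul _ _,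
        hintg₁, integral_const]
      simp
    rw [e] at hmono
    nlinarith [hmono]
  calc t ^ 3 ≤ ∫ x, g₁ x * (g₁ x * g₁ x) ∂μ := hstep5
  _ ≤ ∫ x, g₁ x * (μ[g₂ * g₂ | (invariantAlgebra T₁)]) x ∂μ := hstep4
  _ = ∫ x, g₁ x * (μ[f * g₂ | (invariantAlgebra T₁)]) x ∂μ := hstep3.symm
  _ = ∫ x, g₁ x * (f x * g₂ x) ∂μ := hstep2.symm
  _ = ∫ x in A, g₁ x * g₂ x ∂μ := hstep1.symm
end

section
/- Let (a_n), (b_n), (c_n) be sequences of complex numbers, each bounded in modulus by 1. Then for every positive integer N, |(1/N²) ∑_{m,n=1}^N a_n · b_m · c_{n+m}|² ≤ 4 · min( sup_{t ∈ ℝ} |(1/(2N)) ∑_{m'=1}^{2N} c_{m'} e^{2πi m' t}|² , sup_{t ∈ ℝ} |(1/N) ∑_{n'=1}^N a_{n'} e^{2πi n' t}|² ). -/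
open Filter Finset Real

lemma ortho (d : ℤ) :
    ∫ t in (0:ℝ)..1, Complex.exp (2 * π * Complex.I * d * t) = if d = 0 then 1 else 0 := by
  rcases eq_or_ne d 0 with h | h
  · simp [h]
  · rw [if_neg h]
    have hc : (2 * (π:ℂ) * Complex.I * d) ≠ 0 := by
      simp [Real.pi_ne_zero, Complex.I_ne_zero, h]
    rw [integral_exp_mul_complex hc]
    have h1 : (2 * (π:ℂ) * Complex.I * d) * ((1:ℝ):ℂ) = d * (2 * π * Complex.I) := by
      push_cast; ring
    have h0 : (2 * (π:ℂ) * Complex.I * d) * ((0:ℝ):ℂ) = 0 := by push_cast; ring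
    rw [h1, h0, Complex.exp_int_mul_two_pi_mul_I, Complex.exp_zero, sub_self, zero_div]

lemma ortho' (d : ℤ) (ε : ℝ) (hε : ε = 1 ∨ ε = -1) :
    ∫ t in (0:ℝ)..1, Complex.exp (2 * π * Complex.I * d * ((ε*t : ℝ):ℂ)) =
      if d = 0 then 1 else 0 := by
  rcases hε with h | h <;> subst h
  · simp only [one_mul]; exact ortho d
  · have he : ∀ t : ℝ, (2 * (π:ℂ) * Complex.I * d * ((-1*t : ℝ):ℂ)) =
        2 * π * Complex.I * ((-d : ℤ):ℂ) * (t:ℂ) := by intro t; push_cast; ring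
    simp only [he]
    rw [ortho (-d)]
    simp [neg_eq_zero]

lemma intg (w : ℂ) (d : ℤ) :
    IntervalIntegrable (fun t : ℝ => w * Complex.exp (2 * π * Complex.I * d * t))
      MeasureTheory.volume 0 1 := by
  apply Continuous.intervalIntegrable; fun_prop

lemma intg' (w : ℂ) (d : ℤ) (ε : ℝ) :
    IntervalIntegrable (fun t : ℝ => w * Complex.exp (2 * π * Complex.I * d * ((ε*t:ℝ):ℂ)))
      MeasureTheory.volume 0 1 := by
  apply Continuous.intervalIntegrable; fun_prop

lemma intsum {ι : Type*} (s : Finset ι) (f : ι → ℝ → ℂ)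
    (h : ∀ i ∈ s, IntervalIntegrable (f i) MeasureTheory.volume 0 1) :
    IntervalIntegrable (fun t => ∑ i ∈ s, f i t) MeasureTheory.volume 0 1 := by
  classical
  induction s using Finset.induction with
  | empty => simp [intervalIntegrable_const]
  | insert _ _ hx ih =>
      simp only [Finset.sum_insert hx]
      exact (h _ (Finset.mem_insert_self _ _)).add
        (ih fun i hi => h i (Finset.mem_insert_of_mem hi))

lemma parseval (M : ℕ) (d : ℕ → ℂ) (ε : ℝ) (hε : ε = 1 ∨ ε = -1) :
    ∫ t in (0:ℝ)..1,
      (‖∑ k ∈ Finset.Icc 1 M, d k * Complex.exp (2*π*Complex.I*k*((ε*t:ℝ):ℂ))‖)^2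
      = ∑ k ∈ Finset.Icc 1 M, (‖d k‖)^2 := by
  set S : ℝ → ℂ := fun t => ∑ k ∈ Finset.Icc 1 M, d k * Complex.exp (2*π*Complex.I*k*((ε*t:ℝ):ℂ))
    with hS
  have hpt : ∀ t : ℝ, S t * (starRingEnd ℂ) (S t) =
      ∑ k ∈ Finset.Icc 1 M, ∑ k' ∈ Finset.Icc 1 M,
        (d k' * (starRingEnd ℂ) (d k)) * Complex.exp (2*π*Complex.I*(((k':ℤ)-k : ℤ))*((ε*t:ℝ):ℂ)) := by
    intro t
    rw [hS]
    simp only [map_sum, map_mul, Finset.sum_mul, Finset.mul_sum]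
    refine Finset.sum_congr rfl fun k _ => Finset.sum_congr rfl fun k' _ => ?_
    have hexp : Complex.exp (2*π*Complex.I*k'*((ε*t:ℝ):ℂ)) *
        (starRingEnd ℂ) (Complex.exp (2*π*Complex.I*k*((ε*t:ℝ):ℂ))) =
        Complex.exp (2*π*Complex.I*(((k':ℤ)-k : ℤ))*((ε*t:ℝ):ℂ)) := by
      rw [← Complex.exp_conj, ← Complex.exp_add]
      congr 1
      simp only [map_mul, Complex.conj_I, Complex.conj_ofReal, map_ofNat, Complex.conj_natCast]
      push_cast; ring
    calc d k' * Complex.exp (2*π*Complex.I*k'*((ε*t:ℝ):ℂ)) *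
          ((starRingEnd ℂ) (d k) * (starRingEnd ℂ) (Complex.exp (2*π*Complex.I*k*((ε*t:ℝ):ℂ))))
        = (d k' * (starRingEnd ℂ) (d k)) * (Complex.exp (2*π*Complex.I*k'*((ε*t:ℝ):ℂ)) *
            (starRingEnd ℂ) (Complex.exp (2*π*Complex.I*k*((ε*t:ℝ):ℂ)))) := by ring
      _ = _ := by rw [hexp]
  have hcint : (∫ t in (0:ℝ)..1, S t * (starRingEnd ℂ) (S t)) =
      ∑ k ∈ Finset.Icc 1 M, (d k * (starRingEnd ℂ) (d k)) := by
    simp only [hpt]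
    rw [intervalIntegral.integral_finset_sum (fun k _ => intsum _ _ (fun k' _ => intg' _ _ _))]
    refine Finset.sum_congr rfl fun k hk => ?_
    rw [intervalIntegral.integral_finset_sum (fun k' _ => intg' _ _ _)]
    have : ∀ k' ∈ Finset.Icc 1 M,
        (∫ t in (0:ℝ)..1, (d k' * (starRingEnd ℂ) (d k)) *
          Complex.exp (2*π*Complex.I*(((k':ℤ)-k : ℤ))*((ε*t:ℝ):ℂ))) =
        (d k' * (starRingEnd ℂ) (d k)) * (if ((k':ℤ)-k : ℤ) = 0 then 1 else 0) := by
      intro k' _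
      rw [intervalIntegral.integral_const_mul, ortho' _ _ hε]
    rw [Finset.sum_congr rfl this]
    simp only [mul_ite, mul_one, mul_zero, sub_eq_zero]
    have hcond : ∀ k' : ℕ, (((k':ℤ) = k)) ↔ (k' = k) := by intro k'; omega
    rw [Finset.sum_congr rfl fun k' _ => if_congr (hcond k') rfl rfl,
      Finset.sum_ite_eq' (Finset.Icc 1 M) k (fun k' => d k' * (starRingEnd ℂ) (d k)), if_pos hk]
  apply Complex.ofReal_injective
  rw [← intervalIntegral.integral_ofReal]
  have : ∀ t : ℝ, (((‖S t‖)^2 : ℝ) : ℂ) = S t * (starRingEnd ℂ) (S t) := by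
    intro t
    rw [Complex.sq_norm, Complex.mul_conj]
  rw [intervalIntegral.integral_congr (g := fun t => S t * (starRingEnd ℂ) (S t)) (fun t _ => this t)]
  rw [hcint]
  push_cast
  refine Finset.sum_congr rfl fun k _ => ?_
  rw [Complex.mul_conj]
  norm_cast
  rw [Complex.sq_norm]

lemma key (a b c : ℕ → ℂ) (N : ℕ) :
    ∫ t in (0:ℝ)..1,
      ((∑ n ∈ Finset.Icc 1 N, a n * Complex.exp (2*π*Complex.I*n*t)) *
       (∑ m ∈ Finset.Icc 1 N, b m * Complex.exp (2*π*Complex.I*m*t)) *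
       (∑ k ∈ Finset.Icc 1 (2*N), c k * Complex.exp (2*π*Complex.I*k*((-t:ℝ):ℂ)))) =
    ∑ m ∈ Finset.Icc 1 N, ∑ n ∈ Finset.Icc 1 N, a n * b m * c (n+m) := by
  have hpt : ∀ t : ℝ,
      ((∑ n ∈ Finset.Icc 1 N, a n * Complex.exp (2*π*Complex.I*n*t)) *
       (∑ m ∈ Finset.Icc 1 N, b m * Complex.exp (2*π*Complex.I*m*t)) *
       (∑ k ∈ Finset.Icc 1 (2*N), c k * Complex.exp (2*π*Complex.I*k*((-t:ℝ):ℂ)))) =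
      ∑ k ∈ Finset.Icc 1 (2*N), ∑ m ∈ Finset.Icc 1 N, ∑ n ∈ Finset.Icc 1 N,
        (a n * b m * c k) * Complex.exp (2*π*Complex.I*(((n:ℤ)+m-k : ℤ))*t) := by
    intro t
    simp only [Finset.sum_mul, Finset.mul_sum]
    refine Finset.sum_congr rfl fun k _ => Finset.sum_congr rfl fun m _ =>
      Finset.sum_congr rfl fun n _ => ?_
    have hexp : Complex.exp (2*π*Complex.I*n*t) * Complex.exp (2*π*Complex.I*m*t) *
        Complex.exp (2*π*Complex.I*k*((-t:ℝ):ℂ)) =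
        Complex.exp (2*π*Complex.I*(((n:ℤ)+m-k : ℤ))*t) := by
      rw [← Complex.exp_add, ← Complex.exp_add]; congr 1; push_cast; ring
    calc a n * Complex.exp (2*π*Complex.I*n*t) * (b m * Complex.exp (2*π*Complex.I*m*t)) *
          (c k * Complex.exp (2*π*Complex.I*k*((-t:ℝ):ℂ)))
        = (a n * b m * c k) * (Complex.exp (2*π*Complex.I*n*t) *
            Complex.exp (2*π*Complex.I*m*t) * Complex.exp (2*π*Complex.I*k*((-t:ℝ):ℂ))) := by
          ring
      _ = _ := by rw [hexp]
  simp only [hpt]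
  rw [intervalIntegral.integral_finset_sum
    (fun k _ => intsum _ _ (fun m _ => intsum _ _ (fun n _ => intg _ _)))]
  have step : ∀ k, (∫ t in (0:ℝ)..1, ∑ m ∈ Finset.Icc 1 N, ∑ n ∈ Finset.Icc 1 N,
      (a n * b m * c k) * Complex.exp (2*π*Complex.I*(((n:ℤ)+m-k : ℤ))*t)) =
      ∑ m ∈ Finset.Icc 1 N, ∑ n ∈ Finset.Icc 1 N,
        (a n * b m * c k) * (if ((n:ℤ)+m-k : ℤ) = 0 then 1 else 0) := by
    intro k
    rw [intervalIntegral.integral_finset_sum (fun m _ => intsum _ _ (fun n _ => intg _ _))]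
    refine Finset.sum_congr rfl fun m _ => ?_
    rw [intervalIntegral.integral_finset_sum (fun n _ => intg _ _)]
    refine Finset.sum_congr rfl fun n _ => ?_
    rw [intervalIntegral.integral_const_mul, ortho]
  rw [Finset.sum_congr rfl fun k _ => step k]
  rw [Finset.sum_comm]
  refine Finset.sum_congr rfl fun m hm => ?_
  rw [Finset.sum_comm]
  refine Finset.sum_congr rfl fun n hn => ?_
  simp only [Finset.mem_Icc] at hm hn
  have hcond : ∀ k : ℕ, (((n:ℤ)+m-k : ℤ) = 0) ↔ (k = n + m) := by intro k; omega
  simp only [mul_ite, mul_one, mul_zero]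
  rw [Finset.sum_congr rfl fun k _ => if_congr (hcond k) rfl rfl,
    Finset.sum_ite_eq' (Finset.Icc 1 (2*N)) (n+m) (fun k => a n * b m * c k)]
  rw [if_pos (by simp only [Finset.mem_Icc]; omega)]

noncomputable def Esum (d : ℕ → ℂ) (M : ℕ) (t : ℝ) : ℂ :=
  ∑ k ∈ Finset.Icc 1 M, d k * Complex.exp (2*π*Complex.I*k*t)

lemma Esum_cont (d : ℕ → ℂ) (M : ℕ) : Continuous (Esum d M) := by
  unfold Esum; fun_prop

lemma key' (a b c : ℕ → ℂ) (N : ℕ) :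
    ∫ t in (0:ℝ)..1, Esum a N t * Esum b N t * Esum c (2*N) (-t) =
    ∑ m ∈ Finset.Icc 1 N, ∑ n ∈ Finset.Icc 1 N, a n * b m * c (n+m) := by
  simpa [Esum] using key a b c N

lemma pars1 (d : ℕ → ℂ) (M : ℕ) :
    ∫ t in (0:ℝ)..1, (‖Esum d M t‖)^2
      = ∑ k ∈ Finset.Icc 1 M, (‖d k‖)^2 := by
  simpa [Esum, one_mul] using parseval M d 1 (Or.inl rfl)

lemma pars2 (d : ℕ → ℂ) (M : ℕ) :
    ∫ t in (0:ℝ)..1, (‖Esum d M (-t)‖)^2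
      = ∑ k ∈ Finset.Icc 1 M, (‖d k‖)^2 := by
  simpa [Esum, neg_one_mul] using parseval M d (-1) (Or.inr rfl)

lemma abs_exp_eq_one (k : ℕ) (t : ℝ) :
    ‖Complex.exp (2*π*Complex.I*k*t)‖ = 1 := by
  rw [show (2*(π:ℂ)*Complex.I*k*t) = ((2*π*k*t : ℝ):ℂ) * Complex.I by push_cast; ring]
  exact Complex.norm_exp_ofReal_mul_I _

lemma Esum_abs_le (d : ℕ → ℂ) (hd : ∀ k, ‖d k‖ ≤ 1) (M : ℕ) (t : ℝ) :
    ‖Esum d M t‖ ≤ M := by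
  calc ‖Esum d M t‖
      ≤ ∑ k ∈ Finset.Icc 1 M, ‖d k * Complex.exp (2*π*Complex.I*k*t)‖ :=
        norm_sum_le _ _
    _ ≤ ∑ k ∈ Finset.Icc 1 M, 1 := by
        refine Finset.sum_le_sum fun k _ => ?_
        rw [norm_mul, abs_exp_eq_one, mul_one]; exact hd k
    _ = M := by simp

lemma sumsq_le (d : ℕ → ℂ) (hd : ∀ k, ‖d k‖ ≤ 1) (M : ℕ) :
    ∑ k ∈ Finset.Icc 1 M, (‖d k‖)^2 ≤ M := by
  calc ∑ k ∈ Finset.Icc 1 M, (‖d k‖)^2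
      ≤ ∑ k ∈ Finset.Icc 1 M, 1 := by
        refine Finset.sum_le_sum fun k _ => ?_
        nlinarith [hd k, norm_nonneg (d k)]
    _ = M := by simp

lemma core_c (a b c : ℕ → ℂ)
    (ha : ∀ n, ‖a n‖ ≤ 1) (hb : ∀ n, ‖b n‖ ≤ 1)
    (N : ℕ) (Q : ℝ) (hQ : 0 ≤ Q)
    (hH : ∀ u : ℝ, ‖Esum c (2*N) u‖ ≤ Q) :
    ‖∑ m ∈ Finset.Icc 1 N, ∑ n ∈ Finset.Icc 1 N, a n * b m * c (n+m)‖ ≤ Q * N := by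
  rw [← key' a b c N]
  have hca := continuous_norm.comp (Esum_cont a N)
  have hcb := continuous_norm.comp (Esum_cont b N)
  have hcc := continuous_norm.comp ((Esum_cont c (2*N)).comp continuous_neg)
  have hcont1 : Continuous fun t : ℝ => ‖Esum a N t * Esum b N t * Esum c (2*N) (-t)‖ :=
    (((Esum_cont a N).mul (Esum_cont b N)).mul ((Esum_cont c (2*N)).comp continuous_neg)).norm
  have hint1 : IntervalIntegrable (fun t : ℝ => ‖Esum a N t * Esum b N t * Esum c (2*N) (-t)‖)
      MeasureTheory.volume 0 1 := hcont1.intervalIntegrable 0 1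
  have hintA : IntervalIntegrable (fun t : ℝ => (‖Esum a N t‖)^2)
      MeasureTheory.volume 0 1 := ((hca.pow 2)).intervalIntegrable 0 1
  have hintB : IntervalIntegrable (fun t : ℝ => (‖Esum b N t‖)^2)
      MeasureTheory.volume 0 1 := ((hcb.pow 2)).intervalIntegrable 0 1
  have hint2 : IntervalIntegrable (fun t : ℝ =>
      Q * (((‖Esum a N t‖)^2 + (‖Esum b N t‖)^2)/2))
      MeasureTheory.volume 0 1 :=
    (((hca.pow 2).add (hcb.pow 2)).div_const 2)|> Continuous.mul continuous_const |>.intervalIntegrable 0 1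
  calc ‖∫ t in (0:ℝ)..1, Esum a N t * Esum b N t * Esum c (2*N) (-t)‖
      ≤ ∫ t in (0:ℝ)..1, ‖Esum a N t * Esum b N t * Esum c (2*N) (-t)‖ :=
        intervalIntegral.norm_integral_le_integral_norm zero_le_one
    _ ≤ ∫ t in (0:ℝ)..1,
        Q * (((‖Esum a N t‖)^2 + (‖Esum b N t‖)^2)/2) := by
        apply intervalIntegral.integral_mono_on zero_le_one hint1 hint2
        intro t _
        simp only [norm_mul]
        have hx0 : 0 ≤ ‖Esum a N t‖ := norm_nonneg _
        have hy0 : 0 ≤ ‖Esum b N t‖ := norm_nonneg _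
        have hz := hH (-t)
        have hxy : ‖Esum a N t‖ * ‖Esum b N t‖ ≤
            ((‖Esum a N t‖)^2 + (‖Esum b N t‖)^2)/2 := by
          nlinarith [sq_nonneg (‖Esum a N t‖ - ‖Esum b N t‖)]
        calc ‖Esum a N t‖ * ‖Esum b N t‖ * ‖Esum c (2*N) (-t)‖
            ≤ ‖Esum a N t‖ * ‖Esum b N t‖ * Q :=
              mul_le_mul_of_nonneg_left hz (mul_nonneg hx0 hy0)
          _ = Q * (‖Esum a N t‖ * ‖Esum b N t‖) := by ring
          _ ≤ Q * (((‖Esum a N t‖)^2 + (‖Esum b N t‖)^2)/2) :=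
              mul_le_mul_of_nonneg_left hxy hQ
    _ = Q * ((∑ k ∈ Finset.Icc 1 N, (‖a k‖)^2
            + ∑ k ∈ Finset.Icc 1 N, (‖b k‖)^2)/2) := by
        rw [intervalIntegral.integral_const_mul, intervalIntegral.integral_div,
          intervalIntegral.integral_add hintA hintB, pars1 a N, pars1 b N]
    _ ≤ Q * (((N:ℝ) + (N:ℝ))/2) := by
        gcongr
        exacts [sumsq_le a ha N, sumsq_le b hb N]
    _ = Q * N := by ring

lemma core_a (a b c : ℕ → ℂ)
    (hb : ∀ n, ‖b n‖ ≤ 1) (hc : ∀ n, ‖c n‖ ≤ 1)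
    (N : ℕ) (Q : ℝ) (hQ : 0 ≤ Q)
    (hF : ∀ u : ℝ, ‖Esum a N u‖ ≤ Q) :
    ‖∑ m ∈ Finset.Icc 1 N, ∑ n ∈ Finset.Icc 1 N, a n * b m * c (n+m)‖ ≤
      Q * (3 * N / 2) := by
  rw [← key' a b c N]
  have hcb := continuous_norm.comp (Esum_cont b N)
  have hcc := continuous_norm.comp ((Esum_cont c (2*N)).comp continuous_neg)
  have hcont1 : Continuous fun t : ℝ => ‖Esum a N t * Esum b N t * Esum c (2*N) (-t)‖ :=
    (((Esum_cont a N).mul (Esum_cont b N)).mul ((Esum_cont c (2*N)).comp continuous_neg)).norm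
  have hint1 : IntervalIntegrable (fun t : ℝ => ‖Esum a N t * Esum b N t * Esum c (2*N) (-t)‖)
      MeasureTheory.volume 0 1 := hcont1.intervalIntegrable 0 1
  have hintB : IntervalIntegrable (fun t : ℝ => (‖Esum b N t‖)^2)
      MeasureTheory.volume 0 1 := ((hcb.pow 2)).intervalIntegrable 0 1
  have hintC : IntervalIntegrable (fun t : ℝ => (‖Esum c (2*N) (-t)‖)^2)
      MeasureTheory.volume 0 1 := ((hcc.pow 2)).intervalIntegrable 0 1
  have hint2 : IntervalIntegrable (fun t : ℝ =>
      Q * (((‖Esum b N t‖)^2 + (‖Esum c (2*N) (-t)‖)^2)/2))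
      MeasureTheory.volume 0 1 :=
    (((hcb.pow 2).add (hcc.pow 2)).div_const 2)|> Continuous.mul continuous_const |>.intervalIntegrable 0 1
  calc ‖∫ t in (0:ℝ)..1, Esum a N t * Esum b N t * Esum c (2*N) (-t)‖
      ≤ ∫ t in (0:ℝ)..1, ‖Esum a N t * Esum b N t * Esum c (2*N) (-t)‖ :=
        intervalIntegral.norm_integral_le_integral_norm zero_le_one
    _ ≤ ∫ t in (0:ℝ)..1,
        Q * (((‖Esum b N t‖)^2 + (‖Esum c (2*N) (-t)‖)^2)/2) := by
        apply intervalIntegral.integral_mono_on zero_le_one hint1 hint2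
        intro t _
        simp only [norm_mul]
        have hy0 : 0 ≤ ‖Esum b N t‖ := norm_nonneg _
        have hz0 : 0 ≤ ‖Esum c (2*N) (-t)‖ := norm_nonneg _
        have hx := hF t
        have hyz : ‖Esum b N t‖ * ‖Esum c (2*N) (-t)‖ ≤
            ((‖Esum b N t‖)^2 + (‖Esum c (2*N) (-t)‖)^2)/2 := by
          nlinarith [sq_nonneg (‖Esum b N t‖ - ‖Esum c (2*N) (-t)‖)]
        calc ‖Esum a N t‖ * ‖Esum b N t‖ * ‖Esum c (2*N) (-t)‖
            = ‖Esum a N t‖ * (‖Esum b N t‖ * ‖Esum c (2*N) (-t)‖) := by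
              ring
          _ ≤ Q * (‖Esum b N t‖ * ‖Esum c (2*N) (-t)‖) :=
              mul_le_mul_of_nonneg_right hx (mul_nonneg hy0 hz0)
          _ ≤ Q * (((‖Esum b N t‖)^2 + (‖Esum c (2*N) (-t)‖)^2)/2) :=
              mul_le_mul_of_nonneg_left hyz hQ
    _ = Q * ((∑ k ∈ Finset.Icc 1 N, (‖b k‖)^2
            + ∑ k ∈ Finset.Icc 1 (2*N), (‖c k‖)^2)/2) := by
        rw [intervalIntegral.integral_const_mul, intervalIntegral.integral_div,
          intervalIntegral.integral_add hintB hintC, pars1 b N, pars2 c (2*N)]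
    _ ≤ Q * (((N:ℝ) + ((2*N:ℕ):ℝ))/2) := by
        gcongr
        exacts [sumsq_le b hb N, sumsq_le c hc (2*N)]
    _ = Q * (3 * N / 2) := by push_cast; ring

lemma sup_bound (M : ℕ) (hM : 0 < M) (d : ℕ → ℂ) (hd : ∀ k, ‖d k‖ ≤ 1) :
    0 ≤ (⨆ t : ℝ, (‖(1/(M:ℂ)) * Esum d M t‖)^2) ∧
    ∀ u : ℝ, ‖Esum d M u‖ ≤
      M * Real.sqrt (⨆ t : ℝ, (‖(1/(M:ℂ)) * Esum d M t‖)^2) := by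
  have hMR : (0:ℝ) < M := by exact_mod_cast hM
  set g : ℝ → ℝ := fun t => (‖(1/(M:ℂ)) * Esum d M t‖)^2 with hg
  have habs : ∀ t, ‖(1/(M:ℂ)) * Esum d M t‖
      = (1/(M:ℝ)) * ‖Esum d M t‖ := by
    intro t; rw [norm_mul, norm_div, norm_one, Complex.norm_natCast]
  have hb : ∀ t, g t ≤ 1 := by
    intro t
    have h1 : ‖(1/(M:ℂ)) * Esum d M t‖ ≤ 1 := by
      rw [habs]
      calc (1/(M:ℝ)) * ‖Esum d M t‖ ≤ (1/(M:ℝ)) * M :=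
            mul_le_mul_of_nonneg_left (Esum_abs_le d hd M t) (by positivity)
        _ = 1 := by field_simp
    have h2 : 0 ≤ ‖(1/(M:ℂ)) * Esum d M t‖ := norm_nonneg _
    have : g t = (‖(1/(M:ℂ)) * Esum d M t‖)^2 := rfl
    rw [this]; nlinarith
  have hbdd : BddAbove (Set.range g) := ⟨1, by rintro x ⟨t, rfl⟩; exact hb t⟩
  have hle : ∀ t, g t ≤ ⨆ t, g t := fun t => le_ciSup hbdd t
  have h0 : 0 ≤ ⨆ t, g t := le_trans (sq_nonneg _) (hle 0)
  refine ⟨h0, fun u => ?_⟩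
  have h2 : (1/(M:ℝ)) * ‖Esum d M u‖ ≤ Real.sqrt (⨆ t, g t) := by
    apply Real.le_sqrt_of_sq_le
    have heq : ((1/(M:ℝ)) * ‖Esum d M u‖)^2 = g u := by
      rw [show g u = (‖(1/(M:ℂ)) * Esum d M u‖)^2 from rfl, habs u]
    exact heq ▸ hle u
  calc ‖Esum d M u‖
      = (M:ℝ) * ((1/(M:ℝ)) * ‖Esum d M u‖) := by field_simp
    _ ≤ M * Real.sqrt (⨆ t, g t) := mul_le_mul_of_nonneg_left h2 (le_of_lt hMR)

/-- **Lemma 1:** for sequences `a`, `b`, `c` bounded in modulus by one,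
`|(1/N²) ∑_{m,n=1}^N aₙ bₘ c_{n+m}|²` is bounded by `4` times the minimum of the
squared sup-norms of the exponential sums of `c` (up to `2N`) and of `a`. -/
theorem sq_cube_average_le_min_sup_exponential_sums
    (a b c : ℕ → ℂ)
    (ha : ∀ n, ‖(a n)‖ ≤ 1) (hb : ∀ n, ‖(b n)‖ ≤ 1)
    (hc : ∀ n, ‖(c n)‖ ≤ 1)
    (N : ℕ) (hN : 0 < N) :
    (‖((1 / (N : ℂ) ^ 2) * ∑ m ∈ Finset.Icc 1 N, ∑ n ∈ Finset.Icc 1 N,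
        a n * b m * c (n + m))‖) ^ 2 ≤
      4 * min
        (⨆ t : ℝ, (‖((1 / (2 * N : ℂ)) * ∑ m' ∈ Finset.Icc 1 (2 * N),
          c m' * Complex.exp (2 * π * Complex.I * m' * t))‖) ^ 2)
        (⨆ t : ℝ, (‖((1 / (N : ℂ)) * ∑ n' ∈ Finset.Icc 1 N,
          a n' * Complex.exp (2 * π * Complex.I * n' * t))‖) ^ 2) := by
  have hNR : (0:ℝ) < (N:ℝ) := by exact_mod_cast hN
  simp only [show ∀ (d : ℕ → ℂ) (M : ℕ) (t : ℝ),
      (∑ k ∈ Finset.Icc 1 M, d k * Complex.exp (2*π*Complex.I*k*t)) = Esum d M t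
    from fun _ _ _ => rfl]
  simp only [show (2*(N:ℂ)) = ((2*N:ℕ):ℂ) from by push_cast; ring]
  set S := ∑ m ∈ Finset.Icc 1 N, ∑ n ∈ Finset.Icc 1 N, a n * b m * c (n + m) with hSdef
  have habsS : ‖(1 / (N:ℂ)^2) * S‖ = (1/(N:ℝ)^2) * ‖S‖ := by
    rw [norm_mul, norm_div, norm_one, norm_pow, Complex.norm_natCast]
  have hS0 : 0 ≤ ‖S‖ := norm_nonneg _
  rw [mul_min_of_nonneg _ _ (by norm_num : (0:ℝ) ≤ 4)]
  refine le_min ?_ ?_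
  · -- c side
    obtain ⟨h0, hbd⟩ := sup_bound (2*N) (by omega) c hc
    set Mc := ⨆ t : ℝ, (‖(1/(((2*N:ℕ)):ℂ)) * Esum c (2*N) t‖)^2 with hMc
    have hS := core_c a b c ha hb N (((2*N:ℕ):ℝ) * Real.sqrt Mc) (by positivity) hbd
    rw [habsS]
    have hsqrt : Real.sqrt Mc ^ 2 = Mc := Real.sq_sqrt h0
    have step : (1/(N:ℝ)^2) * ‖S‖ ≤ 2 * Real.sqrt Mc := by
      rw [div_mul_eq_mul_div, one_mul, div_le_iff₀ (by positivity)]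
      calc ‖S‖ ≤ (((2*N:ℕ):ℝ) * Real.sqrt Mc) * N := hS
        _ = 2 * Real.sqrt Mc * (N:ℝ)^2 := by push_cast; ring
    calc ((1/(N:ℝ)^2) * ‖S‖)^2 ≤ (2 * Real.sqrt Mc)^2 :=
          pow_le_pow_left₀ (by positivity) step 2
      _ = 4 * Mc := by rw [mul_pow, hsqrt]; norm_num
  · -- a side
    obtain ⟨h0, hbd⟩ := sup_bound N hN a ha
    set Ma := ⨆ t : ℝ, (‖(1/((N:ℕ):ℂ)) * Esum a N t‖)^2 with hMa
    have hS := core_a a b c hb hc N (((N:ℕ):ℝ) * Real.sqrt Ma) (by positivity) hbd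
    rw [habsS]
    have hsqrt : Real.sqrt Ma ^ 2 = Ma := Real.sq_sqrt h0
    have h0s : 0 ≤ Real.sqrt Ma := Real.sqrt_nonneg _
    have step : (1/(N:ℝ)^2) * ‖S‖ ≤ (3/2) * Real.sqrt Ma := by
      rw [div_mul_eq_mul_div, one_mul, div_le_iff₀ (by positivity)]
      calc ‖S‖ ≤ (((N:ℕ):ℝ) * Real.sqrt Ma) * (3 * N / 2) := hS
        _ = (3/2) * Real.sqrt Ma * (N:ℝ)^2 := by push_cast; ring
    calc ((1/(N:ℝ)^2) * ‖S‖)^2 ≤ ((3/2) * Real.sqrt Ma)^2 :=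
          pow_le_pow_left₀ (by positivity) step 2
      _ = (9/4) * Ma := by rw [mul_pow, hsqrt]; norm_num
      _ ≤ 4 * Ma := by nlinarith [h0]
end

section
/- Let (b_m) and (c_m) be sequences of complex numbers bounded in modulus by 1, and suppose that lim_{N→∞} sup_{t ∈ ℝ} |(1/N) ∑_{m=1}^N c_m e^{2πi m t}| = 0. Then lim_{N→∞} sup_{t ∈ ℝ} |(1/N²) ∑_{m,n=1}^N b_m · c_{n+m} · e^{2πi n t}| = 0. -/
open Filter Finset Real

private lemma aux_expabs (m : ℕ) (t : ℝ) :
    ‖Complex.exp (2 * π * Complex.I * m * t)‖ = 1 := by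
  rw [Complex.norm_exp]; norm_num [Complex.mul_re, Complex.mul_im]

private noncomputable def gsup (c : ℕ → ℂ) (M : ℕ) : ℝ :=
  ⨆ t : ℝ, ‖(1 / (M : ℂ)) * ∑ m ∈ Finset.Icc 1 M,
    c m * Complex.exp (2 * π * Complex.I * m * t)‖

private lemma aux_avg_le_one (c : ℕ → ℂ) (hc : ∀ m, ‖c m‖ ≤ 1) (N : ℕ) (t : ℝ) :
    ‖(1 / (N : ℂ)) * ∑ m ∈ Finset.Icc 1 N,
      c m * Complex.exp (2 * π * Complex.I * m * t)‖ ≤ 1 := by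
  rcases Nat.eq_zero_or_pos N with h | h
  · simp [h]
  · rw [norm_mul]
    have h1 : ‖1 / (N : ℂ)‖ = 1 / N := by
      rw [norm_div]; simp
    have h2 : ‖∑ m ∈ Finset.Icc 1 N,
        c m * Complex.exp (2 * π * Complex.I * m * t)‖ ≤ N := by
      calc ‖∑ m ∈ Finset.Icc 1 N, c m * Complex.exp (2 * π * Complex.I * m * t)‖
          ≤ ∑ m ∈ Finset.Icc 1 N, ‖c m * Complex.exp (2 * π * Complex.I * m * t)‖ :=
            norm_sum_le _ _
        _ ≤ ∑ m ∈ Finset.Icc 1 N, 1 := by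
            refine Finset.sum_le_sum fun m _ => ?_
            rw [norm_mul, aux_expabs, mul_one]; exact hc m
        _ = N := by simp
    rw [h1]
    have hN : (0:ℝ) < N := by exact_mod_cast h
    calc (1 / (N:ℝ)) * ‖_‖ ≤ (1/(N:ℝ)) * N := by
          apply mul_le_mul_of_nonneg_left h2 (by positivity)
      _ = 1 := by field_simp

private lemma gsup_nonneg (c : ℕ → ℂ) (M : ℕ) : 0 ≤ gsup c M :=
  Real.iSup_nonneg fun _ => norm_nonneg _

private lemma gsup_le_one (c : ℕ → ℂ) (hc : ∀ m, ‖c m‖ ≤ 1) (M : ℕ) :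
    gsup c M ≤ 1 :=
  ciSup_le fun t => aux_avg_le_one c hc M t

private lemma aux_S_le (c : ℕ → ℂ) (hc : ∀ m, ‖c m‖ ≤ 1) (M : ℕ) (t : ℝ) :
    ‖∑ k ∈ Finset.Icc 1 M, c k * Complex.exp (2 * π * Complex.I * k * t)‖
      ≤ M * gsup c M := by
  rcases Nat.eq_zero_or_pos M with h | h
  · simp [h, gsup]
  · have hbdd : BddAbove (Set.range fun s : ℝ => ‖(1 / (M : ℂ)) *
        ∑ m ∈ Finset.Icc 1 M, c m * Complex.exp (2 * π * Complex.I * m * s)‖) :=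
      ⟨1, by rintro x ⟨s, rfl⟩; exact aux_avg_le_one c hc M s⟩
    have hle : ‖(1 / (M : ℂ)) * ∑ m ∈ Finset.Icc 1 M,
        c m * Complex.exp (2 * π * Complex.I * m * t)‖ ≤ gsup c M := le_ciSup hbdd t
    have hMne : ((M:ℝ)) ≠ 0 := by positivity
    have key : ‖∑ k ∈ Finset.Icc 1 M, c k * Complex.exp (2 * π * Complex.I * k * t)‖
        = M * ‖(1 / (M : ℂ)) * ∑ m ∈ Finset.Icc 1 M,
            c m * Complex.exp (2 * π * Complex.I * m * t)‖ := by
      rw [norm_mul, norm_div]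
      simp only [norm_one, Complex.norm_natCast]
      field_simp
      congr 1
      exact Finset.sum_congr rfl fun x _ => by ring_nf
    rw [key]
    exact mul_le_mul_of_nonneg_left hle (by positivity)

private lemma aux_shift (c : ℕ → ℂ) (N m : ℕ) (t : ℝ) :
    ‖∑ n ∈ Finset.Icc 1 N, c (n + m) * Complex.exp (2 * π * Complex.I * n * t)‖
      ≤ ‖∑ k ∈ Finset.Icc 1 (N + m), c k * Complex.exp (2 * π * Complex.I * k * t)‖
        + ‖∑ k ∈ Finset.Icc 1 m, c k * Complex.exp (2 * π * Complex.I * k * t)‖ := by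
  set f : ℕ → ℂ := fun k => c k * Complex.exp (2 * π * Complex.I * k * t) with hf
  have step1 : (∑ n ∈ Finset.Icc 1 N, c (n + m) * Complex.exp (2 * π * Complex.I * n * t))
      = Complex.exp (-(2 * π * Complex.I * m * t)) * ∑ k ∈ Finset.Ioc m (N + m), f k := by
    have h0 : Finset.Ioc m (N + m) = Finset.Ioc (0 + m) (N + m) := by rw [Nat.zero_add]
    have : ∑ k ∈ Finset.Ioc m (N + m), f k = ∑ n ∈ Finset.Ioc 0 N, f (n + m) := by
      rw [h0, ← Finset.map_add_right_Ioc 0 N m, Finset.sum_map]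
      simp [addRightEmbedding]
    rw [this, Finset.mul_sum, ← Finset.Icc_add_one_left_eq_Ioc]
    refine Finset.sum_congr rfl fun n _ => ?_
    simp only [hf]
    rw [mul_left_comm, ← Complex.exp_add]
    congr 1
    push_cast
    ring_nf
  have step2 : (∑ k ∈ Finset.Ioc m (N + m), f k)
      = (∑ k ∈ Finset.Icc 1 (N + m), f k) - ∑ k ∈ Finset.Icc 1 m, f k := by
    rw [show (1:ℕ) = 0 + 1 from rfl, Finset.Icc_add_one_left_eq_Ioc, Finset.Icc_add_one_left_eq_Ioc,
      ← Finset.sum_Ioc_consecutive f (Nat.zero_le m) (Nat.le_add_left m N)]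
    ring
  rw [step1, step2, norm_mul]
  have habs : ‖Complex.exp (-(2 * π * Complex.I * m * t))‖ = 1 := by
    rw [Complex.norm_exp]; norm_num [Complex.mul_re, Complex.mul_im]
  rw [habs, one_mul]
  exact (norm_sub_le _ _)

private lemma aux_h_tendsto (g : ℕ → ℝ) (hg0 : ∀ M, 0 ≤ g M) (hg1 : ∀ M, g M ≤ 1)
    (hgz : Tendsto g atTop (nhds 0)) :
    Tendsto (fun N : ℕ => (1 / (N:ℝ)^2) *
        ∑ m ∈ Finset.Icc 1 N, (((N:ℝ) + m) * g (N + m) + m * g m))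
      atTop (nhds 0) := by
  rw [Metric.tendsto_atTop]
  intro ε hε
  rw [Metric.tendsto_atTop] at hgz
  obtain ⟨M₀, hM₀⟩ := hgz (ε/8) (by positivity)
  have hM₀' : ∀ M ≥ M₀, g M ≤ ε/8 := fun M hM => by
    have := hM₀ M hM
    rw [Real.dist_eq, sub_zero, abs_of_nonneg (hg0 M)] at this
    linarith
  obtain ⟨K, hK⟩ := exists_nat_gt ((M₀:ℝ)^2 * 2 / ε)
  refine ⟨max (max M₀ 1) K, fun n hn => ?_⟩
  have hnM₀ : M₀ ≤ n := le_trans (le_trans (le_max_left _ _) (le_max_left _ _)) hn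
  have hn1 : 1 ≤ n := le_trans (le_trans (le_max_right _ _) (le_max_left _ _)) hn
  have hnK : K ≤ n := le_trans (le_max_right _ _) hn
  have hnpos : (0:ℝ) < n := by exact_mod_cast hn1
  have hterm : ∀ m ∈ Finset.Icc 1 n,
      ((n:ℝ) + m) * g (n + m) + m * g m ≤ 2 * n * (ε/8) + ((M₀:ℝ)^2 + n * (ε/8)) := by
    intro m hm
    obtain ⟨hm1, hmn⟩ := Finset.mem_Icc.mp hm
    have hmn' : (m:ℝ) ≤ n := by exact_mod_cast hmn
    have hmnonneg : (0:ℝ) ≤ m := Nat.cast_nonneg m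
    have h1 : ((n:ℝ) + m) * g (n + m) ≤ 2 * n * (ε/8) := by
      have hgnm : g (n + m) ≤ ε/8 := hM₀' _ (le_trans hnM₀ (Nat.le_add_right n m))
      have h2 : ((n:ℝ) + m) ≤ 2 * n := by linarith
      exact mul_le_mul h2 hgnm (hg0 _) (by positivity)
    have h2 : (m:ℝ) * g m ≤ (M₀:ℝ)^2 + n * (ε/8) := by
      have hsq : (0:ℝ) ≤ (M₀:ℝ)^2 := by positivity
      have hne : (0:ℝ) ≤ (n:ℝ) * (ε/8) := by positivity
      rcases le_or_gt M₀ m with h | h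
      · have hgm : g m ≤ ε/8 := hM₀' m h
        have : (m:ℝ) * g m ≤ n * (ε/8) := mul_le_mul hmn' hgm (hg0 m) (by positivity)
        linarith
      · have hmlt : (m:ℝ) < M₀ := by exact_mod_cast h
        have h1M : (1:ℝ) ≤ (M₀:ℝ) := by
          have : 1 ≤ M₀ := by omega
          exact_mod_cast this
        have hgle := hg1 m
        have : (m:ℝ) * g m ≤ (M₀:ℝ)^2 := by nlinarith [hg0 m]
        linarith
    linarith
  have hsum : ∑ m ∈ Finset.Icc 1 n, (((n:ℝ) + m) * g (n + m) + m * g m)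
      ≤ n * (2 * n * (ε/8) + ((M₀:ℝ)^2 + n * (ε/8))) := by
    calc ∑ m ∈ Finset.Icc 1 n, (((n:ℝ) + m) * g (n + m) + m * g m)
        ≤ ∑ _m ∈ Finset.Icc 1 n, (2 * n * (ε/8) + ((M₀:ℝ)^2 + n * (ε/8))) :=
          Finset.sum_le_sum hterm
      _ = n * (2 * n * (ε/8) + ((M₀:ℝ)^2 + n * (ε/8))) := by
          rw [Finset.sum_const, Nat.card_Icc]; simp [nsmul_eq_mul]; ring
  have hnonneg : (0:ℝ) ≤ ∑ m ∈ Finset.Icc 1 n, (((n:ℝ) + m) * g (n + m) + m * g m) :=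
    Finset.sum_nonneg fun m _ => by
      have := hg0 (n+m); have := hg0 m; positivity
  rw [Real.dist_eq, sub_zero, abs_of_nonneg (by positivity)]
  have hstep : (1 / (n:ℝ)^2) * ∑ m ∈ Finset.Icc 1 n, (((n:ℝ) + m) * g (n + m) + m * g m)
      ≤ (1 / (n:ℝ)^2) * (n * (2 * n * (ε/8) + ((M₀:ℝ)^2 + n * (ε/8)))) :=
    mul_le_mul_of_nonneg_left hsum (by positivity)
  have hfinal : (1 / (n:ℝ)^2) * (n * (2 * n * (ε/8) + ((M₀:ℝ)^2 + n * (ε/8))))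
      = ε/4 + (M₀:ℝ)^2 / n + ε/8 := by
    field_simp
    ring
  have hlast : (M₀:ℝ)^2 / n < ε/2 := by
    have hKn : ((M₀:ℝ)^2 * 2 / ε) < n := lt_of_lt_of_le hK (by exact_mod_cast hnK)
    rw [div_lt_iff₀ hnpos]
    rw [div_lt_iff₀ hε] at hKn
    nlinarith
  calc (1 / (n:ℝ)^2) * ∑ m ∈ Finset.Icc 1 n, (((n:ℝ) + m) * g (n + m) + m * g m)
      ≤ ε/4 + (M₀:ℝ)^2 / n + ε/8 := by rw [← hfinal]; exact hstep
    _ < ε := by linarith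

/-- If the exponential sums of `c` tend to `0` uniformly in `t`, then so do the
twisted double averages `(1/N²) ∑_{m,n=1}^N bₘ c_{n+m} e^{2πint}`. -/
theorem tendsto_sup_twisted_double_average_zero
    (b c : ℕ → ℂ)
    (hb : ∀ m, ‖b m‖ ≤ 1) (hc : ∀ m, ‖c m‖ ≤ 1)
    (hcz : Tendsto (fun N : ℕ =>
        ⨆ t : ℝ, ‖(1 / (N : ℂ)) * ∑ m ∈ Finset.Icc 1 N,
          c m * Complex.exp (2 * π * Complex.I * m * t)‖)
      atTop (nhds 0)) :
    Tendsto (fun N : ℕ =>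
        ⨆ t : ℝ, ‖(1 / (N : ℂ) ^ 2) * ∑ m ∈ Finset.Icc 1 N,
          ∑ n ∈ Finset.Icc 1 N,
            b m * c (n + m) * Complex.exp (2 * π * Complex.I * n * t)‖)
      atTop (nhds 0) := by
  have hgz : Tendsto (gsup c) atTop (nhds 0) := hcz
  have hbound : ∀ N : ℕ, ∀ t : ℝ,
      ‖(1 / (N : ℂ) ^ 2) * ∑ m ∈ Finset.Icc 1 N, ∑ n ∈ Finset.Icc 1 N,
        b m * c (n + m) * Complex.exp (2 * π * Complex.I * n * t)‖
      ≤ (1 / (N:ℝ)^2) * ∑ m ∈ Finset.Icc 1 N,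
          (((N:ℝ) + m) * gsup c (N + m) + m * gsup c m) := by
    intro N t
    rw [norm_mul]
    have e1 : ‖1 / (N:ℂ)^2‖ = 1 / (N:ℝ)^2 := by
      rw [norm_div, norm_one, norm_pow]; simp
    rw [e1]
    refine mul_le_mul_of_nonneg_left ?_ (by positivity)
    calc ‖∑ m ∈ Finset.Icc 1 N, ∑ n ∈ Finset.Icc 1 N,
            b m * c (n + m) * Complex.exp (2 * π * Complex.I * n * t)‖
        ≤ ∑ m ∈ Finset.Icc 1 N, ‖∑ n ∈ Finset.Icc 1 N,
            b m * c (n + m) * Complex.exp (2 * π * Complex.I * n * t)‖ :=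
          norm_sum_le _ _
      _ ≤ ∑ m ∈ Finset.Icc 1 N, (((N:ℝ) + m) * gsup c (N + m) + m * gsup c m) := by
          refine Finset.sum_le_sum fun m _ => ?_
          have hinner : (∑ n ∈ Finset.Icc 1 N,
              b m * c (n + m) * Complex.exp (2 * π * Complex.I * n * t))
              = b m * ∑ n ∈ Finset.Icc 1 N,
                  c (n + m) * Complex.exp (2 * π * Complex.I * n * t) := by
            rw [Finset.mul_sum]; refine Finset.sum_congr rfl fun n _ => by ring
          rw [hinner, norm_mul]
          calc ‖b m‖ * ‖∑ n ∈ Finset.Icc 1 N,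
                  c (n + m) * Complex.exp (2 * π * Complex.I * n * t)‖
              ≤ 1 * ‖∑ n ∈ Finset.Icc 1 N,
                  c (n + m) * Complex.exp (2 * π * Complex.I * n * t)‖ :=
                mul_le_mul_of_nonneg_right (hb m) (norm_nonneg _)
            _ = ‖∑ n ∈ Finset.Icc 1 N,
                  c (n + m) * Complex.exp (2 * π * Complex.I * n * t)‖ := one_mul _
            _ ≤ ‖∑ k ∈ Finset.Icc 1 (N + m),
                    c k * Complex.exp (2 * π * Complex.I * k * t)‖
                + ‖∑ k ∈ Finset.Icc 1 m,
                    c k * Complex.exp (2 * π * Complex.I * k * t)‖ := aux_shift c N m t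
            _ ≤ ((N:ℝ) + m) * gsup c (N + m) + m * gsup c m := by
                have h1 := aux_S_le c hc (N + m) t
                have h2 := aux_S_le c hc m t
                push_cast at h1
                exact add_le_add h1 h2
  exact squeeze_zero (fun N => Real.iSup_nonneg fun t => norm_nonneg _)
    (fun N => ciSup_le fun t => hbound N t)
    (aux_h_tendsto (gsup c) (gsup_nonneg c) (gsup_le_one c hc) hgz)
end

section
/- There is an absolute constant C > 0 such that the following holds: for all sequences (a_n), (b_n), (c_n), (d_n), (e_n), (f_n), (g_n) of complex numbers bounded in modulus by 1 and every positive integer N, |(1/N³) ∑_{n,m,p=1}^N a_p · b_n · c_{p+n} · d_m · e_{n+m} · f_{p+m} · g_{n+m+p}|² ≤ C · (1/N) ∑_{n=1}^N sup_{t ∈ ℝ} |(1/(2N)) ∑_{m'=1}^{2N} f_{m'} · g_{n+m'} · e^{2πi m' t}|². -/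
open Filter Finset Real


private lemma geom_orth {M : ℕ} (z : ℂ) (hz : z ^ M = 1) :
    ∑ j ∈ Finset.range M, z ^ j = if z = 1 then (M : ℂ) else 0 := by
  split_ifs with h
  · simp [h]
  · rw [geom_sum_eq h M, hz]; simp

private lemma exp_orth (M : ℕ) (hM : 0 < M) (r : ℤ) :
    ∑ j ∈ Finset.range M, Complex.exp (2 * π * Complex.I * r / M) ^ j =
      if (M : ℤ) ∣ r then (M : ℂ) else 0 := by
  have hMC : (M : ℂ) ≠ 0 := by exact_mod_cast hM.ne'
  have hz : Complex.exp (2 * π * Complex.I * r / M) ^ M = 1 := by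
    rw [← Complex.exp_nat_mul]
    rw [show (M : ℂ) * (2 * π * Complex.I * r / M) = r * (2 * π * Complex.I) by
      field_simp]
    exact Complex.exp_int_mul_two_pi_mul_I r
  rw [geom_orth _ hz]
  congr 1
  rw [eq_iff_iff]
  constructor
  · intro h
    rw [Complex.exp_eq_one_iff] at h
    obtain ⟨k, hk⟩ := h
    refine ⟨k, ?_⟩
    have h2 : (2 * π * Complex.I : ℂ) ≠ 0 := by
      simp [Real.pi_ne_zero, Complex.I_ne_zero, Complex.ofReal_ne_zero]
    have : (r : ℂ) = (M : ℂ) * k := by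
      have h3 : (2 * π * Complex.I) * (r : ℂ) = (2 * π * Complex.I) * ((M : ℂ) * k) := by
        field_simp at hk
        linear_combination (2 * π * Complex.I) * hk
      exact mul_left_cancel₀ h2 h3
    exact_mod_cast this
  · rintro ⟨k, rfl⟩
    rw [show (2 * π * Complex.I * ((M : ℤ) * k : ℤ) / M : ℂ) = k * (2 * π * Complex.I) by
      push_cast; field_simp]
    exact Complex.exp_int_mul_two_pi_mul_I k

private lemma pair_orth (M : ℕ) (hM : 0 < M) (k k' : ℕ) (hk : k ∈ Finset.Icc 1 M)
    (hk' : k' ∈ Finset.Icc 1 M) :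
    ∑ j ∈ Finset.range M,
      (Complex.exp (2 * π * Complex.I * j / M)) ^ k *
        (starRingEnd ℂ (Complex.exp (2 * π * Complex.I * j / M))) ^ k' =
      if k = k' then (M : ℂ) else 0 := by
  have hterm : ∀ j : ℕ,
      (Complex.exp (2 * π * Complex.I * j / M)) ^ k *
        (starRingEnd ℂ (Complex.exp (2 * π * Complex.I * j / M))) ^ k' =
      Complex.exp (2 * π * Complex.I * ((((k : ℤ) - (k' : ℤ) : ℤ)) : ℂ) / M) ^ j := by
    intro j
    rw [← Complex.exp_conj]
    rw [← Complex.exp_nat_mul, ← Complex.exp_nat_mul, ← Complex.exp_nat_mul,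
      ← Complex.exp_add]
    congr 1
    have : (starRingEnd ℂ) (2 * ↑π * Complex.I * ↑j / ↑M) = -(2 * ↑π * Complex.I * ↑j / ↑M) := by
      simp only [map_div₀, map_mul, Complex.conj_I, map_ofNat, Complex.conj_natCast, Complex.conj_ofReal]
      ring
    rw [this]
    have hMC : (M : ℂ) ≠ 0 := by exact_mod_cast hM.ne'
    push_cast
    field_simp
    ring
  rw [Finset.sum_congr rfl (fun j _ => hterm j), exp_orth M hM ((k : ℤ) - k')]
  simp only [Finset.mem_Icc] at hk hk'
  congr 1
  rw [eq_iff_iff]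
  constructor
  · intro h
    have habs : ((k : ℤ) - k').natAbs < M := by omega
    have := Int.eq_zero_of_dvd_of_natAbs_lt_natAbs h (by omega)
    omega
  · rintro rfl; simp
private lemma parseval_s13 (M N : ℕ) (hM : 0 < M) (hNM : N ≤ M) (α : ℕ → ℂ)
    (hα : ∀ p, ‖α p‖ ≤ 1) :
    ∑ j ∈ Finset.range M,
      (‖∑ p ∈ Finset.Icc 1 N,
        α p * (starRingEnd ℂ (Complex.exp (2 * π * Complex.I * j / M))) ^ p‖) ^ 2
      ≤ (M : ℝ) * N := by
  set w : ℕ → ℂ := fun j => Complex.exp (2 * π * Complex.I * j / M) with hw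
  set A : ℕ → ℂ := fun j => ∑ p ∈ Finset.Icc 1 N, α p * (starRingEnd ℂ (w j)) ^ p with hA
  have key : ∑ j ∈ Finset.range M, A j * (starRingEnd ℂ) (A j) =
      (M : ℂ) * ∑ p ∈ Finset.Icc 1 N, α p * (starRingEnd ℂ) (α p) := by
    have expand : ∀ j, A j * (starRingEnd ℂ) (A j) =
        ∑ p ∈ Finset.Icc 1 N, ∑ p' ∈ Finset.Icc 1 N,
          (α p * (starRingEnd ℂ) (α p')) * ((w j) ^ p' * (starRingEnd ℂ (w j)) ^ p) := by
      intro j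
      rw [hA]
      simp only [map_sum, map_mul, map_pow, Complex.conj_conj]
      rw [Finset.sum_mul_sum]
      apply Finset.sum_congr rfl; intro p _
      apply Finset.sum_congr rfl; intro p' _
      ring
    rw [Finset.sum_congr rfl (fun j _ => expand j)]
    rw [Finset.sum_comm]
    have inner : ∀ p ∈ Finset.Icc 1 N, (∑ j ∈ Finset.range M, ∑ p' ∈ Finset.Icc 1 N,
        (α p * (starRingEnd ℂ) (α p')) * ((w j) ^ p' * (starRingEnd ℂ (w j)) ^ p)) =
        (M : ℂ) * (α p * (starRingEnd ℂ) (α p)) := by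
      intro p hp
      rw [Finset.sum_comm]
      have hpM : p ∈ Finset.Icc 1 M := by
        simp only [Finset.mem_Icc] at hp ⊢; omega
      have : ∀ p' ∈ Finset.Icc 1 N,
          ∑ j ∈ Finset.range M, (α p * (starRingEnd ℂ) (α p')) * ((w j) ^ p' * (starRingEnd ℂ (w j)) ^ p)
          = (α p * (starRingEnd ℂ) (α p')) * (if p' = p then (M : ℂ) else 0) := by
        intro p' hp'
        rw [← Finset.mul_sum]
        congr 1
        have hp'M : p' ∈ Finset.Icc 1 M := by
          simp only [Finset.mem_Icc] at hp' ⊢; omega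
        exact pair_orth M hM p' p hp'M hpM
      rw [Finset.sum_congr rfl this]
      simp only [mul_ite, mul_zero]
      rw [Finset.sum_ite_eq' (Finset.Icc 1 N) p]
      simp only [if_pos hp]; ring
    rw [Finset.sum_congr rfl inner, ← Finset.mul_sum]
  have habs : ∀ j, (‖A j‖) ^ 2 = (A j * (starRingEnd ℂ) (A j)).re := by
    intro j
    rw [Complex.mul_conj]
    simp [Complex.normSq_eq_norm_sq, ← Complex.ofReal_pow]
  rw [Finset.sum_congr rfl (fun j _ => habs j), ← Complex.re_sum, key]
  have : ((M : ℂ) * ∑ p ∈ Finset.Icc 1 N, α p * (starRingEnd ℂ) (α p)).re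
      = (M : ℝ) * ∑ p ∈ Finset.Icc 1 N, (‖α p‖)^2 := by
    have : ∀ p, α p * (starRingEnd ℂ) (α p) = ((‖α p‖)^2 : ℝ) := by
      intro p; rw [Complex.mul_conj]; simp [Complex.normSq_eq_norm_sq, ← Complex.ofReal_pow]
    rw [Finset.sum_congr rfl (fun p _ => this p), ← Complex.ofReal_sum]
    norm_cast
  rw [this]
  have hb : ∑ p ∈ Finset.Icc 1 N, (‖α p‖)^2 ≤ (N : ℝ) := by
    calc ∑ p ∈ Finset.Icc 1 N, (‖α p‖)^2 ≤ ∑ p ∈ Finset.Icc 1 N, 1 := by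
          apply Finset.sum_le_sum; intro p _
          have := hα p
          nlinarith [norm_nonneg (α p)]
      _ = (N : ℝ) := by simp
  have hMpos : (0:ℝ) ≤ (M:ℝ) := by positivity
  nlinarith
private lemma inversion (M : ℕ) (hM : 0 < M) (K : ℕ → ℂ) (k : ℕ) (hk : k ∈ Finset.Icc 1 M) :
    K k = (1 / M : ℂ) * ∑ j ∈ Finset.range M,
      (∑ m' ∈ Finset.Icc 1 M, K m' * (Complex.exp (2 * π * Complex.I * j / M)) ^ m') *
        (starRingEnd ℂ (Complex.exp (2 * π * Complex.I * j / M))) ^ k := by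
  have hMC : (M : ℂ) ≠ 0 := by exact_mod_cast hM.ne'
  have step : ∀ j : ℕ,
      (∑ m' ∈ Finset.Icc 1 M, K m' * (Complex.exp (2 * π * Complex.I * j / M)) ^ m') *
        (starRingEnd ℂ (Complex.exp (2 * π * Complex.I * j / M))) ^ k
      = ∑ m' ∈ Finset.Icc 1 M, K m' * ((Complex.exp (2 * π * Complex.I * j / M)) ^ m' *
          (starRingEnd ℂ (Complex.exp (2 * π * Complex.I * j / M))) ^ k) := by
    intro j
    rw [Finset.sum_mul]
    exact Finset.sum_congr rfl (fun m' _ => by ring)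
  rw [Finset.sum_congr rfl (fun j _ => step j), Finset.sum_comm]
  have inner : ∀ m' ∈ Finset.Icc 1 M,
      ∑ j ∈ Finset.range M, K m' * ((Complex.exp (2 * π * Complex.I * j / M)) ^ m' *
          (starRingEnd ℂ (Complex.exp (2 * π * Complex.I * j / M))) ^ k)
      = K m' * (if m' = k then (M : ℂ) else 0) := by
    intro m' hm'
    rw [← Finset.mul_sum, pair_orth M hM m' k hm' hk]
  rw [Finset.sum_congr rfl inner]
  simp only [mul_ite, mul_zero]
  rw [Finset.sum_ite_eq' (Finset.Icc 1 M) k]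
  simp only [if_pos hk]
  field_simp
private lemma factor_sum (s t : Finset ℕ) (c k : ℂ) (X Y : ℕ → ℂ) :
    ∑ m ∈ t, ∑ p ∈ s, c * (k * X p * Y m) = c * (k * (∑ p ∈ s, X p) * (∑ m ∈ t, Y m)) := by
  rw [Finset.sum_comm]
  calc ∑ p ∈ s, ∑ m ∈ t, c * (k * X p * Y m)
      = ∑ p ∈ s, ∑ m ∈ t, (c * k) * (X p * Y m) :=
        Finset.sum_congr rfl fun p _ => Finset.sum_congr rfl fun m _ => by ring
    _ = (c * k) * ∑ p ∈ s, ∑ m ∈ t, X p * Y m := by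
        rw [Finset.mul_sum]
        exact Finset.sum_congr rfl fun p _ => (Finset.mul_sum _ _ _).symm
    _ = (c * k) * ((∑ p ∈ s, X p) * (∑ m ∈ t, Y m)) := by rw [Finset.sum_mul_sum]
    _ = c * (k * (∑ p ∈ s, X p) * (∑ m ∈ t, Y m)) := by ring
private lemma bilinear_bound (N : ℕ) (hN : 0 < N) (α β K : ℕ → ℂ)
    (hα : ∀ p, ‖α p‖ ≤ 1) (hβ : ∀ p, ‖β p‖ ≤ 1)
    (B : ℝ) (hB : 0 ≤ B)
    (hK : ∀ j : ℕ, ‖∑ m' ∈ Finset.Icc 1 (2 * N),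
      K m' * (Complex.exp (2 * π * Complex.I * (j : ℕ) / ((2 * N : ℕ) : ℂ))) ^ m'‖ ≤ B) :
    ‖∑ m ∈ Finset.Icc 1 N, ∑ p ∈ Finset.Icc 1 N, α p * β m * K (p + m)‖
      ≤ (N : ℝ) * B := by
  set M := 2 * N with hMdef
  have hM : 0 < M := by omega
  have hMC : (M : ℂ) ≠ 0 := by exact_mod_cast hM.ne'
  set w : ℕ → ℂ := fun j => Complex.exp (2 * π * Complex.I * j / M) with hw
  set Khat : ℕ → ℂ := fun j => ∑ m' ∈ Finset.Icc 1 M, K m' * (w j) ^ m' with hKhat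
  set Abar : ℕ → ℂ := fun j => ∑ p ∈ Finset.Icc 1 N, α p * (starRingEnd ℂ (w j)) ^ p with hAbar
  set Bbar : ℕ → ℂ := fun j => ∑ m ∈ Finset.Icc 1 N, β m * (starRingEnd ℂ (w j)) ^ m with hBbar
  -- Step 1: rewrite the double sum via Fourier inversion
  have step1 : ∑ m ∈ Finset.Icc 1 N, ∑ p ∈ Finset.Icc 1 N, α p * β m * K (p + m)
      = ∑ j ∈ Finset.range M, (1 / M : ℂ) * (Khat j * Abar j * Bbar j) := by
    have h1 : ∀ m ∈ Finset.Icc 1 N, ∀ p ∈ Finset.Icc 1 N,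
        α p * β m * K (p + m) = ∑ j ∈ Finset.range M,
          (1 / M : ℂ) * (Khat j * (α p * (starRingEnd ℂ (w j)) ^ p)
            * (β m * (starRingEnd ℂ (w j)) ^ m)) := by
      intro m hm p hp
      simp only [Finset.mem_Icc] at hm hp
      have hpm : p + m ∈ Finset.Icc 1 M := by simp only [Finset.mem_Icc]; omega
      rw [inversion M hM K (p + m) hpm, Finset.mul_sum, Finset.mul_sum]
      apply Finset.sum_congr rfl
      intro j _
      rw [pow_add]
      ring
    calc ∑ m ∈ Finset.Icc 1 N, ∑ p ∈ Finset.Icc 1 N, α p * β m * K (p + m)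
        = ∑ m ∈ Finset.Icc 1 N, ∑ p ∈ Finset.Icc 1 N, ∑ j ∈ Finset.range M,
            (1 / M : ℂ) * (Khat j * (α p * (starRingEnd ℂ (w j)) ^ p)
              * (β m * (starRingEnd ℂ (w j)) ^ m)) :=
          Finset.sum_congr rfl fun m hm => Finset.sum_congr rfl fun p hp => h1 m hm p hp
      _ = ∑ m ∈ Finset.Icc 1 N, ∑ j ∈ Finset.range M, ∑ p ∈ Finset.Icc 1 N,
            (1 / M : ℂ) * (Khat j * (α p * (starRingEnd ℂ (w j)) ^ p)
              * (β m * (starRingEnd ℂ (w j)) ^ m)) :=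
          Finset.sum_congr rfl fun m _ => Finset.sum_comm
      _ = ∑ j ∈ Finset.range M, ∑ m ∈ Finset.Icc 1 N, ∑ p ∈ Finset.Icc 1 N,
            (1 / M : ℂ) * (Khat j * (α p * (starRingEnd ℂ (w j)) ^ p)
              * (β m * (starRingEnd ℂ (w j)) ^ m)) :=
          Finset.sum_comm
      _ = ∑ j ∈ Finset.range M, (1 / M : ℂ) * (Khat j * Abar j * Bbar j) :=
          Finset.sum_congr rfl fun j _ =>
            factor_sum (Finset.Icc 1 N) (Finset.Icc 1 N) (1 / M : ℂ) (Khat j)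
              (fun p => α p * (starRingEnd ℂ (w j)) ^ p)
              (fun m => β m * (starRingEnd ℂ (w j)) ^ m)
  -- Step 2: bound
  rw [step1]
  have habsK : ∀ j : ℕ, ‖Khat j‖ ≤ B := fun j => hK j
  calc ‖∑ j ∈ Finset.range M, (1 / M : ℂ) * (Khat j * Abar j * Bbar j)‖
      ≤ ∑ j ∈ Finset.range M, ‖(1 / M : ℂ) * (Khat j * Abar j * Bbar j)‖ :=
        norm_sum_le _ _
    _ ≤ ∑ j ∈ Finset.range M, (1 / M : ℝ) * B * (‖Abar j‖ * ‖Bbar j‖) := by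
        apply Finset.sum_le_sum
        intro j _
        rw [norm_mul, norm_mul, norm_mul]
        have h1M : ‖(1 / M : ℂ)‖ = 1 / (M : ℝ) := by
          rw [norm_div]; simp
        rw [h1M]
        have h0 : (0:ℝ) ≤ 1 / (M:ℝ) := by positivity
        have h4 : ‖Khat j‖ * (‖Abar j‖ * ‖Bbar j‖)
            ≤ B * (‖Abar j‖ * ‖Bbar j‖) :=
          mul_le_mul_of_nonneg_right (habsK j) (by positivity)
        calc 1 / (M:ℝ) * (‖Khat j‖ * ‖Abar j‖ * ‖Bbar j‖)
            = 1 / (M:ℝ) * (‖Khat j‖ * (‖Abar j‖ * ‖Bbar j‖)) := by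
              ring
          _ ≤ 1 / (M:ℝ) * (B * (‖Abar j‖ * ‖Bbar j‖)) :=
              mul_le_mul_of_nonneg_left h4 h0
          _ = 1 / (M:ℝ) * B * (‖Abar j‖ * ‖Bbar j‖) := by ring
    _ = (1 / M : ℝ) * B * ∑ j ∈ Finset.range M, ‖Abar j‖ * ‖Bbar j‖ :=
        (Finset.mul_sum _ _ _).symm
    _ ≤ (1 / M : ℝ) * B * ((M : ℝ) * N) := by
        apply mul_le_mul_of_nonneg_left _ (by positivity)
        have hCS := Real.sum_mul_le_sqrt_mul_sqrt (Finset.range M)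
          (fun j => ‖Abar j‖) (fun j => ‖Bbar j‖)
        have hPA : ∑ j ∈ Finset.range M, (‖Abar j‖) ^ 2 ≤ (M : ℝ) * N :=
          parseval_s13 M N hM (by omega) α hα
        have hPB : ∑ j ∈ Finset.range M, (‖Bbar j‖) ^ 2 ≤ (M : ℝ) * N :=
          parseval_s13 M N hM (by omega) β hβ
        have hMN : (0:ℝ) ≤ (M:ℝ) * N := by positivity
        have h1 : Real.sqrt (∑ j ∈ Finset.range M, (‖Abar j‖) ^ 2)
            ≤ Real.sqrt ((M:ℝ) * N) := Real.sqrt_le_sqrt hPA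
        have h2 : Real.sqrt (∑ j ∈ Finset.range M, (‖Bbar j‖) ^ 2)
            ≤ Real.sqrt ((M:ℝ) * N) := Real.sqrt_le_sqrt hPB
        calc ∑ j ∈ Finset.range M, ‖Abar j‖ * ‖Bbar j‖
            ≤ Real.sqrt (∑ j ∈ Finset.range M, (‖Abar j‖) ^ 2) *
              Real.sqrt (∑ j ∈ Finset.range M, (‖Bbar j‖) ^ 2) := hCS
          _ ≤ Real.sqrt ((M:ℝ) * N) * Real.sqrt ((M:ℝ) * N) :=
              mul_le_mul h1 h2 (Real.sqrt_nonneg _) (Real.sqrt_nonneg _)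
          _ = (M:ℝ) * N := Real.mul_self_sqrt hMN
    _ = (N : ℝ) * B := by
        have hMR : (M:ℝ) ≠ 0 := by positivity
        field_simp

/-- **The key inequality in the proof of Theorem 2:** there is an absolute
constant `C > 0` bounding the squared triple cube average of seven bounded
sequences by `C` times the average over `n` of the squared sup of the twisted
exponential sums of `f_{m'} · g_{n+m'}`. -/
theorem sq_triple_cube_average_le :
    ∃ C : ℝ, 0 < C ∧
      ∀ a b c d e f g : ℕ → ℂ,
        (∀ n, ‖a n‖ ≤ 1) → (∀ n, ‖b n‖ ≤ 1) →
        (∀ n, ‖c n‖ ≤ 1) → (∀ n, ‖d n‖ ≤ 1) →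
        (∀ n, ‖e n‖ ≤ 1) → (∀ n, ‖f n‖ ≤ 1) →
        (∀ n, ‖g n‖ ≤ 1) →
        ∀ N : ℕ, 0 < N →
          (‖(1 / (N : ℂ) ^ 3) *
              ∑ n ∈ Finset.Icc 1 N, ∑ m ∈ Finset.Icc 1 N, ∑ p ∈ Finset.Icc 1 N,
                a p * b n * c (p + n) * d m * e (n + m) * f (p + m) *
                  g (n + m + p)‖) ^ 2 ≤
            C * ((1 / (N : ℝ)) * ∑ n ∈ Finset.Icc 1 N,
              ⨆ t : ℝ, (‖(1 / (2 * N : ℂ)) *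
                ∑ m' ∈ Finset.Icc 1 (2 * N),
                  f m' * g (n + m') *
                    Complex.exp (2 * π * Complex.I * m' * t)‖) ^ 2) := by
  refine ⟨4, by norm_num, ?_⟩
  intro a b c d e f g ha hb hc hd he hf hg N hN
  have hNR : (0:ℝ) < N := by exact_mod_cast hN
  set F : ℕ → ℝ → ℝ := fun n t => (‖(1 / (2 * N : ℂ)) *
                ∑ m' ∈ Finset.Icc 1 (2 * N),
                  f m' * g (n + m') *
                    Complex.exp (2 * π * Complex.I * m' * t)‖) ^ 2 with hF
  set V : ℕ → ℝ := fun n => ⨆ t : ℝ, F n t with hV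
  -- boundedness of F
  have hFbd : ∀ n t, F n t ≤ 1 := by
    intro n t
    rw [hF]
    simp only
    have h1 : ‖(1 / (2 * N : ℂ)) *
        ∑ m' ∈ Finset.Icc 1 (2 * N), f m' * g (n + m') *
          Complex.exp (2 * π * Complex.I * m' * t)‖ ≤ 1 := by
      rw [norm_mul]
      have h2 : ‖1 / (2 * N : ℂ)‖ = 1 / (2 * N : ℝ) := by
        rw [norm_div, norm_one, norm_mul]
        simp [Complex.norm_natCast]
      rw [h2]
      have h3 : ‖∑ m' ∈ Finset.Icc 1 (2 * N), f m' * g (n + m') *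
          Complex.exp (2 * π * Complex.I * m' * t)‖ ≤ 2 * N := by
        calc ‖∑ m' ∈ Finset.Icc 1 (2 * N), f m' * g (n + m') *
              Complex.exp (2 * π * Complex.I * m' * t)‖
            ≤ ∑ m' ∈ Finset.Icc 1 (2 * N), ‖f m' * g (n + m') *
              Complex.exp (2 * π * Complex.I * m' * t)‖ := norm_sum_le _ _
          _ ≤ ∑ m' ∈ Finset.Icc 1 (2 * N), 1 := by
              apply Finset.sum_le_sum
              intro m' _
              rw [norm_mul, norm_mul]
              have he1 : ‖Complex.exp (2 * π * Complex.I * m' * t)‖ = 1 := by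
                rw [Complex.norm_exp]
                have : (2 * π * Complex.I * m' * t).re = 0 := by
                  simp [Complex.mul_re, Complex.mul_im]
                rw [this, Real.exp_zero]
              rw [he1, mul_one]
              exact mul_le_one₀ (hf m') (norm_nonneg _) (hg (n + m'))
          _ = 2 * N := by simp
      calc (1 / (2 * N : ℝ)) * ‖∑ m' ∈ Finset.Icc 1 (2 * N),
            f m' * g (n + m') * Complex.exp (2 * π * Complex.I * m' * t)‖
          ≤ (1 / (2 * N : ℝ)) * (2 * N) :=
            mul_le_mul_of_nonneg_left h3 (by positivity)
        _ = 1 := by field_simp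
    nlinarith [norm_nonneg ((1 / (2 * N : ℂ)) *
        ∑ m' ∈ Finset.Icc 1 (2 * N), f m' * g (n + m') *
          Complex.exp (2 * π * Complex.I * m' * t))]
  have hbdd : ∀ n, BddAbove (Set.range (F n)) := by
    intro n
    refine ⟨1, ?_⟩
    rintro x ⟨t, rfl⟩
    exact hFbd n t
  have hVnn : ∀ n, 0 ≤ V n := by
    intro n
    rw [hV]
    exact Real.iSup_nonneg (fun t => by positivity)
  have hle : ∀ n t, F n t ≤ V n := fun n t => le_ciSup (hbdd n) t
  -- the Fourier coefficient bound
  have hKb : ∀ n, ∀ j : ℕ, ‖∑ m' ∈ Finset.Icc 1 (2 * N),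
      (f m' * g (n + m')) * (Complex.exp (2 * π * Complex.I * (j : ℕ) / ((2 * N : ℕ) : ℂ))) ^ m'‖
      ≤ 2 * N * Real.sqrt (V n) := by
    intro n j
    set t : ℝ := (j : ℝ) / (2 * N : ℝ) with ht
    have hexp : ∀ m' : ℕ, (Complex.exp (2 * π * Complex.I * (j : ℕ) / ((2 * N : ℕ) : ℂ))) ^ m'
        = Complex.exp (2 * π * Complex.I * m' * (t : ℂ)) := by
      intro m'
      rw [← Complex.exp_nat_mul]
      congr 1
      rw [ht]
      have h2N : ((2 * N : ℕ) : ℂ) ≠ 0 := by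
        have : (0:ℕ) < 2 * N := by omega
        exact_mod_cast this.ne'
      push_cast
      push_cast at h2N
      field_simp
    have hsum : ∑ m' ∈ Finset.Icc 1 (2 * N),
        (f m' * g (n + m')) * (Complex.exp (2 * π * Complex.I * (j : ℕ) / ((2 * N : ℕ) : ℂ))) ^ m'
        = (2 * N : ℂ) * ((1 / (2 * N : ℂ)) * ∑ m' ∈ Finset.Icc 1 (2 * N),
            f m' * g (n + m') * Complex.exp (2 * π * Complex.I * m' * (t : ℂ))) := by
      rw [Finset.sum_congr rfl (fun m' _ => by rw [hexp m'])]
      have h2N : (2 * (N:ℂ)) ≠ 0 := by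
        have : (N:ℂ) ≠ 0 := by exact_mod_cast hN.ne'
        simp [this]
      rw [← mul_assoc, mul_one_div_cancel h2N, one_mul]
    rw [hsum, norm_mul]
    have habs2N : ‖2 * (N:ℂ)‖ = 2 * N := by
      rw [norm_mul]; simp [Complex.norm_natCast]
    rw [habs2N]
    apply mul_le_mul_of_nonneg_left _ (by positivity)
    have hsq : (‖(1 / (2 * N : ℂ)) * ∑ m' ∈ Finset.Icc 1 (2 * N),
        f m' * g (n + m') * Complex.exp (2 * π * Complex.I * m' * (t : ℂ))‖) ^ 2 ≤ V n :=
      hle n t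
    exact (Real.le_sqrt (norm_nonneg _) (hVnn n)).mpr hsq
  -- per-n bound on the double sum
  have hSb : ∀ n, ‖∑ m ∈ Finset.Icc 1 N, ∑ p ∈ Finset.Icc 1 N,
      a p * b n * c (p + n) * d m * e (n + m) * f (p + m) * g (n + m + p)‖
      ≤ 2 * (N:ℝ)^2 * Real.sqrt (V n) := by
    intro n
    have hsplit : ∑ m ∈ Finset.Icc 1 N, ∑ p ∈ Finset.Icc 1 N,
        a p * b n * c (p + n) * d m * e (n + m) * f (p + m) * g (n + m + p)
        = b n * ∑ m ∈ Finset.Icc 1 N, ∑ p ∈ Finset.Icc 1 N,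
            (a p * c (p + n)) * (d m * e (n + m)) * (f (p + m) * g (n + (p + m))) := by
      rw [Finset.mul_sum]
      apply Finset.sum_congr rfl; intro m _
      rw [Finset.mul_sum]
      apply Finset.sum_congr rfl; intro p _
      rw [show n + m + p = n + (p + m) by ring]
      ring
    rw [hsplit, norm_mul]
    have hbil := bilinear_bound N hN (fun p => a p * c (p + n)) (fun m => d m * e (n + m))
      (fun k => f k * g (n + k))
      (fun p => by
        rw [norm_mul]
        exact mul_le_one₀ (ha p) (norm_nonneg _) (hc (p + n)))
      (fun m => by
        rw [norm_mul]
        exact mul_le_one₀ (hd m) (norm_nonneg _) (he (n + m)))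
      (2 * N * Real.sqrt (V n)) (by positivity) (hKb n)
    calc ‖b n‖ * ‖∑ m ∈ Finset.Icc 1 N, ∑ p ∈ Finset.Icc 1 N,
          (a p * c (p + n)) * (d m * e (n + m)) * (f (p + m) * g (n + (p + m)))‖
        ≤ 1 * ((N:ℝ) * (2 * N * Real.sqrt (V n))) :=
          mul_le_mul (hb n) hbil (norm_nonneg _) (by norm_num)
      _ = 2 * (N:ℝ)^2 * Real.sqrt (V n) := by ring
  -- total bound
  have htot : ‖(1 / (N : ℂ) ^ 3) *
      ∑ n ∈ Finset.Icc 1 N, ∑ m ∈ Finset.Icc 1 N, ∑ p ∈ Finset.Icc 1 N,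
        a p * b n * c (p + n) * d m * e (n + m) * f (p + m) * g (n + m + p)‖
      ≤ (2 / (N:ℝ)) * ∑ n ∈ Finset.Icc 1 N, Real.sqrt (V n) := by
    rw [norm_mul]
    have h1 : ‖1 / (N : ℂ) ^ 3‖ = 1 / (N:ℝ)^3 := by
      rw [norm_div, norm_one, norm_pow]
      simp [Complex.norm_natCast]
    rw [h1]
    calc (1 / (N:ℝ)^3) * ‖∑ n ∈ Finset.Icc 1 N, ∑ m ∈ Finset.Icc 1 N,
          ∑ p ∈ Finset.Icc 1 N,
          a p * b n * c (p + n) * d m * e (n + m) * f (p + m) * g (n + m + p)‖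
        ≤ (1 / (N:ℝ)^3) * ∑ n ∈ Finset.Icc 1 N, (2 * (N:ℝ)^2 * Real.sqrt (V n)) := by
          apply mul_le_mul_of_nonneg_left _ (by positivity)
          calc ‖∑ n ∈ Finset.Icc 1 N, ∑ m ∈ Finset.Icc 1 N,
                ∑ p ∈ Finset.Icc 1 N,
                a p * b n * c (p + n) * d m * e (n + m) * f (p + m) * g (n + m + p)‖
              ≤ ∑ n ∈ Finset.Icc 1 N, ‖∑ m ∈ Finset.Icc 1 N,
                ∑ p ∈ Finset.Icc 1 N,
                a p * b n * c (p + n) * d m * e (n + m) * f (p + m) * g (n + m + p)‖ :=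
                norm_sum_le _ _
            _ ≤ ∑ n ∈ Finset.Icc 1 N, (2 * (N:ℝ)^2 * Real.sqrt (V n)) :=
                Finset.sum_le_sum (fun n _ => hSb n)
      _ = (2 / (N:ℝ)) * ∑ n ∈ Finset.Icc 1 N, Real.sqrt (V n) := by
          rw [← Finset.mul_sum]
          field_simp
  -- square and Cauchy-Schwarz
  have hCS : (∑ n ∈ Finset.Icc 1 N, Real.sqrt (V n)) ^ 2 ≤ (N:ℝ) * ∑ n ∈ Finset.Icc 1 N, V n := by
    have := Finset.sum_mul_sq_le_sq_mul_sq (Finset.Icc 1 N)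
      (fun n => (1:ℝ)) (fun n => Real.sqrt (V n))
    simp only [one_mul, one_pow] at this
    have hcard : ∑ n ∈ Finset.Icc 1 N, (1:ℝ) = (N:ℝ) := by simp
    have hsq : ∀ n ∈ Finset.Icc 1 N, Real.sqrt (V n) ^ 2 = V n :=
      fun n _ => Real.sq_sqrt (hVnn n)
    rw [hcard, Finset.sum_congr rfl hsq] at this
    exact this
  have hLnn : (0:ℝ) ≤ ‖(1 / (N : ℂ) ^ 3) *
      ∑ n ∈ Finset.Icc 1 N, ∑ m ∈ Finset.Icc 1 N, ∑ p ∈ Finset.Icc 1 N,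
        a p * b n * c (p + n) * d m * e (n + m) * f (p + m) * g (n + m + p)‖ :=
    norm_nonneg _
  calc (‖(1 / (N : ℂ) ^ 3) *
        ∑ n ∈ Finset.Icc 1 N, ∑ m ∈ Finset.Icc 1 N, ∑ p ∈ Finset.Icc 1 N,
          a p * b n * c (p + n) * d m * e (n + m) * f (p + m) * g (n + m + p)‖) ^ 2
      ≤ ((2 / (N:ℝ)) * ∑ n ∈ Finset.Icc 1 N, Real.sqrt (V n)) ^ 2 :=
        pow_le_pow_left₀ hLnn htot 2
    _ = (4 / (N:ℝ)^2) * (∑ n ∈ Finset.Icc 1 N, Real.sqrt (V n)) ^ 2 := by ring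
    _ ≤ (4 / (N:ℝ)^2) * ((N:ℝ) * ∑ n ∈ Finset.Icc 1 N, V n) :=
        mul_le_mul_of_nonneg_left hCS (by positivity)
    _ = 4 * ((1 / (N:ℝ)) * ∑ n ∈ Finset.Icc 1 N, V n) := by
        field_simp
end
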